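/- arXiv:1109.3841 — 9 statements merged into one kernel-verified Lean document; each statement's English description precedes it below -/
import Mathlib

section
/- Let $\Theta_1,\Theta_2,\ldots$ be IID real random variables with mean $\mu \le 0$ and variance $\sigma^2$, and define $S_1 \ge 0$, $S_{i+1} = \max\{S_i + \Theta_i, 0\}$. Then for every $k \ge 1$, $\mathbb{E}[S_{k+1}] \le \sqrt{k(\mu^2 + \sigma^2) + S_1^2}$. -/
open MeasureTheory ProbabilityTheory Filter

/-!
The second moment grows by at most `μ² + σ²` per step: `max (x + θ) 0 ^ 2 ≤ (x + θ) ^ 2`, and since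
`Θ k` is independent of the past, `E[(S k + Θ k)²] = E[S k²] + 2 E[S k] μ + (μ² + σ²)`, where the
cross term is `≤ 0` because `S k ≥ 0` and `μ ≤ 0`. Hence `E[S (k+1)²] ≤ k (μ² + σ²) + S₁²`, and the
claim follows from `E[X] ≤ √E[X²]`.
-/

section Moments

variable {Ω : Type*} {m : MeasurableSpace Ω} {P : Measure Ω} {X Y : Ω → ℝ}

lemma integral_sq_add_of_indepFun (hX : MemLp X 2 P) (hY : MemLp Y 2 P) (hXY : IndepFun X Y P) :
    ∫ ω, (X ω + Y ω) ^ 2 ∂P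
      = ∫ ω, X ω ^ 2 ∂P + 2 * ((∫ ω, X ω ∂P) * ∫ ω, Y ω ∂P) + ∫ ω, Y ω ^ 2 ∂P := by
  have hXY_int : Integrable (fun ω => 2 * (X ω * Y ω)) P := (hX.integrable_mul hY).const_mul 2
  have hX_XY_int : Integrable (fun ω => X ω ^ 2 + 2 * (X ω * Y ω)) P :=
    hX.integrable_sq.add hXY_int
  have hexpand : (fun ω => (X ω + Y ω) ^ 2) = fun ω => X ω ^ 2 + 2 * (X ω * Y ω) + Y ω ^ 2 := by
    funext ω; ring
  rw [hexpand, integral_add hX_XY_int hY.integrable_sq,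
    integral_add hX.integrable_sq hXY_int, integral_const_mul]
  congr 3
  exact hXY.integral_mul_eq_mul_integral hX.aestronglyMeasurable hY.aestronglyMeasurable

lemma sq_max_zero_le (x : ℝ) : max x 0 ^ 2 ≤ x ^ 2 := by
  rcases le_total x 0 with hx | hx
  · simpa [max_eq_right hx] using sq_nonneg x
  · rw [max_eq_left hx]

lemma integral_sq_max_add_zero_le (hX0 : 0 ≤ᵐ[P] X) (hX : MemLp X 2 P) (hY : MemLp Y 2 P)
    (hXY : IndepFun X Y P) (hY_mean : ∫ ω, Y ω ∂P ≤ 0) :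
    ∫ ω, max (X ω + Y ω) 0 ^ 2 ∂P ≤ ∫ ω, X ω ^ 2 ∂P + ∫ ω, Y ω ^ 2 ∂P := by
  have hdrift : (∫ ω, X ω ∂P) * ∫ ω, Y ω ∂P ≤ 0 :=
    mul_nonpos_of_nonneg_of_nonpos (integral_nonneg_of_ae hX0) hY_mean
  calc ∫ ω, max (X ω + Y ω) 0 ^ 2 ∂P ≤ ∫ ω, (X ω + Y ω) ^ 2 ∂P :=
        integral_mono (hX.add hY).pos_part.integrable_sq (hX.add hY).integrable_sq
          fun ω => sq_max_zero_le _
    _ = ∫ ω, X ω ^ 2 ∂P + 2 * ((∫ ω, X ω ∂P) * ∫ ω, Y ω ∂P) + ∫ ω, Y ω ^ 2 ∂P :=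
        integral_sq_add_of_indepFun hX hY hXY
    _ ≤ ∫ ω, X ω ^ 2 ∂P + ∫ ω, Y ω ^ 2 ∂P := by linarith

lemma integral_le_sqrt_of_integral_sq_le [IsProbabilityMeasure P] {c : ℝ} (hX : MemLp X 2 P)
    (hc : ∫ ω, X ω ^ 2 ∂P ≤ c) : ∫ ω, X ω ∂P ≤ Real.sqrt c := by
  have hsq : (∫ ω, X ω ∂P) ^ 2 ≤ ∫ ω, X ω ^ 2 ∂P := by
    have h := variance_nonneg X P
    rw [variance_eq_sub hX] at h
    simp only [Pi.pow_apply] at h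
    linarith
  exact (le_abs_self _).trans (Real.abs_le_sqrt (hsq.trans hc))

end Moments

section ReflectedWalk

variable {Ω : Type*} {m : MeasurableSpace Ω} {P : Measure Ω} {Θ S : ℕ → Ω → ℝ} {s₁ : ℝ}

lemma reflectedWalk_nonneg (hs₁ : 0 ≤ s₁) (hS1 : ∀ ω, S 1 ω = s₁)
    (hSdyn : ∀ i ≥ 1, ∀ ω, S (i + 1) ω = max (S i ω + Θ i ω) 0) (k : ℕ) : 0 ≤ S (k + 1) := by
  intro ω
  cases k with
  | zero => simp [hS1 ω, hs₁]
  | succ k => simp [hSdyn (k + 1) (by omega) ω]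

lemma reflectedWalk_memLp [IsFiniteMeasure P] (hL2 : ∀ i, MemLp (Θ i) 2 P) (hS1 : ∀ ω, S 1 ω = s₁)
    (hSdyn : ∀ i ≥ 1, ∀ ω, S (i + 1) ω = max (S i ω + Θ i ω) 0) (k : ℕ) :
    MemLp (S (k + 1)) 2 P := by
  induction k with
  | zero => simpa [funext hS1] using memLp_const s₁
  | succ k ih =>
    rw [funext (hSdyn (k + 1) (by omega))]
    exact (ih.add (hL2 (k + 1))).pos_part

lemma reflectedWalk_measurable_natural (hΘ : ∀ i, StronglyMeasurable (Θ i))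
    (hS1 : ∀ ω, S 1 ω = s₁) (hSdyn : ∀ i ≥ 1, ∀ ω, S (i + 1) ω = max (S i ω + Θ i ω) 0)
    (k : ℕ) : Measurable[Filtration.natural Θ hΘ k] (S (k + 1)) := by
  induction k with
  | zero => simp [funext hS1]
  | succ k ih =>
    rw [funext (hSdyn (k + 1) (by omega))]
    have hΘk : Measurable[Filtration.natural Θ hΘ (k + 1)] (Θ (k + 1)) :=
      (Filtration.stronglyAdapted_natural hΘ (k + 1)).measurable
    exact ((ih.mono (Filtration.mono _ k.le_succ) le_rfl).add hΘk).max measurable_const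

lemma reflectedWalk_indepFun (hΘ : ∀ i, StronglyMeasurable (Θ i))
    (hindep : iIndepFun Θ P) (hS1 : ∀ ω, S 1 ω = s₁)
    (hSdyn : ∀ i ≥ 1, ∀ ω, S (i + 1) ω = max (S i ω + Θ i ω) 0) (k : ℕ) :
    IndepFun (S (k + 1)) (Θ (k + 1)) P := by
  rw [IndepFun_iff_Indep]
  exact indep_of_indep_of_le_left (hindep.indep_comap_natural_of_lt hΘ k.lt_succ_self).symm
    (reflectedWalk_measurable_natural hΘ hS1 hSdyn k).comap_le

lemma reflectedWalk_integral_sq_le [IsProbabilityMeasure P] {c : ℝ}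
    (hΘ : ∀ i, StronglyMeasurable (Θ i)) (hindep : iIndepFun Θ P) (hL2 : ∀ i, MemLp (Θ i) 2 P)
    (hmean : ∀ i, ∫ ω, Θ i ω ∂P ≤ 0) (hsq : ∀ i, ∫ ω, Θ i ω ^ 2 ∂P ≤ c)
    (hs₁ : 0 ≤ s₁) (hS1 : ∀ ω, S 1 ω = s₁)
    (hSdyn : ∀ i ≥ 1, ∀ ω, S (i + 1) ω = max (S i ω + Θ i ω) 0) (k : ℕ) :
    ∫ ω, S (k + 1) ω ^ 2 ∂P ≤ k * c + s₁ ^ 2 := by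
  induction k with
  | zero => simp [hS1]
  | succ k ih =>
    have hstep := integral_sq_max_add_zero_le
      (ae_of_all _ (reflectedWalk_nonneg hs₁ hS1 hSdyn k)) (reflectedWalk_memLp hL2 hS1 hSdyn k)
      (hL2 (k + 1)) (reflectedWalk_indepFun hΘ hindep hS1 hSdyn k) (hmean (k + 1))
    simp only [← hSdyn (k + 1) (by omega)] at hstep
    push_cast
    linarith [hsq (k + 1)]

end ReflectedWalk

theorem stmt0_general {Ω : Type*} [MeasureSpace Ω] [IsProbabilityMeasure (ℙ : Measure Ω)]
    (Θ : ℕ → Ω → ℝ) (S : ℕ → Ω → ℝ) (μ σ s₁ : ℝ)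
    (hmeas : ∀ i, Measurable (Θ i))
    (hindep : iIndepFun Θ ℙ)
    (hL2 : ∀ i, MemLp (Θ i) 2 ℙ)
    (hmean : ∀ i, ∫ ω, Θ i ω ∂ℙ = μ) (hμ : μ ≤ 0)
    (hvar : ∀ i, variance (Θ i) ℙ = σ ^ 2)
    (hS1 : ∀ ω, S 1 ω = s₁) (hs₁ : 0 ≤ s₁)
    (hSdyn : ∀ i ≥ 1, ∀ ω, S (i + 1) ω = max (S i ω + Θ i ω) 0) :
    ∀ k ≥ 1, ∫ ω, S (k + 1) ω ∂ℙ ≤ Real.sqrt (k * (μ ^ 2 + σ ^ 2) + s₁ ^ 2) := by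
  intro k _
  have hsq : ∀ i, ∫ ω, Θ i ω ^ 2 ∂ℙ ≤ μ ^ 2 + σ ^ 2 := fun i => by
    have h := variance_eq_sub (hL2 i)
    rw [hvar i, hmean i] at h
    simp only [Pi.pow_apply] at h
    linarith
  refine integral_le_sqrt_of_integral_sq_le (reflectedWalk_memLp hL2 hS1 hSdyn k) ?_
  exact reflectedWalk_integral_sq_le (fun i => (hmeas i).stronglyMeasurable) hindep hL2
    (fun i => (hmean i).trans_le hμ) hsq hs₁ hS1 hSdyn k

/-- Reflected random walk with IID nonpositive-mean increments:
`E[S (k+1)] ≤ sqrt (k (μ² + σ²) + S₁²)`. -/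
theorem stmt0 {Ω : Type*} [MeasureSpace Ω] [IsProbabilityMeasure (ℙ : Measure Ω)]
    (Θ : ℕ → Ω → ℝ) (S : ℕ → Ω → ℝ) (μ σ s₁ : ℝ)
    (hmeas : ∀ i, Measurable (Θ i))
    (hindep : iIndepFun Θ ℙ)
    (hident : ∀ i j, IdentDistrib (Θ i) (Θ j) ℙ ℙ)
    (hL2 : ∀ i, MemLp (Θ i) 2 ℙ)
    (hmean : ∀ i, ∫ ω, Θ i ω ∂ℙ = μ) (hμ : μ ≤ 0)
    (hvar : ∀ i, variance (Θ i) ℙ = σ ^ 2)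
    (hS1 : ∀ ω, S 1 ω = s₁) (hs₁ : 0 ≤ s₁)
    (hSdyn : ∀ i ≥ 1, ∀ ω, S (i + 1) ω = max (S i ω + Θ i ω) 0) :
    ∀ k ≥ 1, ∫ ω, S (k + 1) ω ∂ℙ ≤ Real.sqrt (k * (μ ^ 2 + σ ^ 2) + s₁ ^ 2) :=
  stmt0_general Θ S μ σ s₁ hmeas hindep hL2 hmean hμ hvar hS1 hs₁ hSdyn
end

section
/- Let $\Theta_1,\ldots,\Theta_k$ be IID with mean $\mu > 0$ and variance $\sigma^2$, $S_1 \ge 0$, and $S_{i+1} = \max\{S_i + \Theta_i, 0\}$. Then $\mathbb{E}[S_{k+1}] \le k\mu + \sqrt{k}\,\log_2(4k)\,\sqrt{\sigma^2 + S_1^2/k}$. -/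
open MeasureTheory ProbabilityTheory Filter

/-- running maximum of a sequence. -/
noncomputable def dbar (a : ℕ → ℝ) (n : ℕ) : ℝ :=
  (Finset.range (n + 1)).sup' Finset.nonempty_range_add_one a

lemma dbar_succ (a : ℕ → ℝ) (n : ℕ) : dbar a (n + 1) = max (a (n + 1)) (dbar a n) := by
  have : dbar a (n+1) = (insert (n+1) (Finset.range (n+1))).sup' (Finset.insert_nonempty _ _) a := by
    rw [dbar]; congr 1; rw [Finset.range_add_one]
  rw [this, Finset.sup'_insert]
  rfl

lemma le_dbar (a : ℕ → ℝ) {j n : ℕ} (h : j ≤ n) : a j ≤ dbar a n :=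
  Finset.le_sup' a (Finset.mem_range.2 (Nat.lt_succ_of_le h))

lemma dbar_nonneg {a : ℕ → ℝ} (ha : ∀ n, 0 ≤ a n) (n : ℕ) : 0 ≤ dbar a n :=
  le_trans (ha 0) (le_dbar a (Nat.zero_le n))

lemma dbar_congr {a b : ℕ → ℝ} {n : ℕ} (h : ∀ j ≤ n, a j = b j) : dbar a n = dbar b n :=
  Finset.sup'_congr _ rfl (fun j hj => h j (Nat.lt_succ_iff.1 (Finset.mem_range.1 hj)))

lemma pathJ {a : ℕ → ℝ} (ha : ∀ n, 0 ≤ a n) (n : ℕ) :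
    2 * ∑ m ∈ Finset.range n, dbar a m * (a (m + 1) - a m) ≤
      2 * dbar a n * a n - (dbar a n) ^ 2 - (a 0) ^ 2 := by
  induction n with
  | zero => simp [dbar]; nlinarith [ha 0]
  | succ n ih =>
    rw [Finset.sum_range_succ, dbar_succ]
    rcases le_total (a (n + 1)) (dbar a n) with h | h
    · rw [max_eq_right h]
      nlinarith [le_dbar a (le_refl n), ha (n+1)]
    · rw [max_eq_left h]
      nlinarith [le_dbar a (le_refl n), ha (n+1), dbar_nonneg ha n]

lemma pathDoob {a : ℕ → ℝ} (ha : ∀ n, 0 ≤ a n) (n : ℕ) :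
    (dbar a n) ^ 2 ≤ 4 * (a n) ^ 2 - 4 * ∑ m ∈ Finset.range n, dbar a m * (a (m + 1) - a m) := by
  have hJ := pathJ ha n
  have h1 : a n ≤ dbar a n := le_dbar a le_rfl
  nlinarith [sq_nonneg (2 * a n - dbar a n), sq_nonneg (a 0)]

lemma cross_nonneg {Ω : Type*} [MeasureSpace Ω] [IsProbabilityMeasure (ℙ : Measure Ω)]
    {E : Type*} [MeasurableSpace E] (V : Ω → E) (Z : Ω → ℝ)
    (hV : Measurable V) (hZ : Measurable Z) (hind : IndepFun V Z ℙ)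
    (hZi : Integrable Z ℙ) (G H : E → ℝ) (hG : Measurable G) (hH : Measurable H)
    (hGnn : ∀ v, 0 ≤ G v) (hGi : Integrable (fun ω => G (V ω)) ℙ) :
    0 ≤ ∫ ω, G (V ω) * (|H (V ω) + (Z ω - ∫ z, Z z ∂ℙ)| - |H (V ω)|) ∂ℙ := by
  set c : ℝ := ∫ z, Z z ∂ℙ with hc
  set F : E × ℝ → ℝ := fun p => G p.1 * (|H p.1 + (p.2 - c)| - |H p.1|) with hF
  have hFmeas : Measurable F := by
    apply ((hG.comp measurable_fst).mul _)
    exact (((hH.comp measurable_fst).add (measurable_snd.sub measurable_const)).abs.sub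
      (hH.comp measurable_fst).abs)
  -- map measures
  have hmapprod : (ℙ : Measure Ω).map (fun ω => (V ω, Z ω)) =
      ((ℙ : Measure Ω).map V).prod ((ℙ : Measure Ω).map Z) :=
    (ProbabilityTheory.indepFun_iff_map_prod_eq_prod_map_map hV.aemeasurable hZ.aemeasurable).mp
      hind
  have hGmap : Integrable G ((ℙ : Measure Ω).map V) := by
    rw [integrable_map_measure hG.aestronglyMeasurable hV.aemeasurable]
    exact hGi
  haveI : IsProbabilityMeasure ((ℙ : Measure Ω).map Z) :=
    Measure.isProbabilityMeasure_map hZ.aemeasurable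
  have hZmap : Integrable (fun z : ℝ => z) ((ℙ : Measure Ω).map Z) := by
    have h := (integrable_map_measure (g := (id : ℝ → ℝ)) (f := Z) (μ := (ℙ : Measure Ω))
      aestronglyMeasurable_id hZ.aemeasurable).mpr
    exact h hZi
  have hZmap' : Integrable (fun z : ℝ => |z| + |c|) ((ℙ : Measure Ω).map Z) :=
    hZmap.abs.add (integrable_const _)
  have hdom : Integrable (fun p : E × ℝ => G p.1 * (|p.2| + |c|))
      (((ℙ : Measure Ω).map V).prod ((ℙ : Measure Ω).map Z)) :=
    hGmap.mul_prod hZmap'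
  have hFint : Integrable F (((ℙ : Measure Ω).map V).prod ((ℙ : Measure Ω).map Z)) := by
    refine hdom.mono' hFmeas.aestronglyMeasurable (Filter.Eventually.of_forall fun p => ?_)
    have h1 : |(|H p.1 + (p.2 - c)| - |H p.1|)| ≤ |p.2 - c| := by
      have := abs_abs_sub_abs_le_abs_sub (H p.1 + (p.2 - c)) (H p.1)
      simpa using this
    have h2 : |p.2 - c| ≤ |p.2| + |c| := abs_sub p.2 c
    calc ‖F p‖ = G p.1 * |(|H p.1 + (p.2 - c)| - |H p.1|)| := by
          rw [Real.norm_eq_abs, hF, abs_mul, abs_of_nonneg (hGnn _)]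
      _ ≤ G p.1 * (|p.2| + |c|) := by
          exact mul_le_mul_of_nonneg_left (h1.trans h2) (hGnn _)
  have key : ∫ ω, G (V ω) * (|H (V ω) + (Z ω - c)| - |H (V ω)|) ∂ℙ
      = ∫ v, ∫ z, F (v, z) ∂((ℙ : Measure Ω).map Z) ∂((ℙ : Measure Ω).map V) := by
    rw [← MeasureTheory.integral_prod F hFint, ← hmapprod,
      integral_map (hV.prodMk hZ).aemeasurable hFmeas.aestronglyMeasurable]
  rw [key]
  refine integral_nonneg fun v => ?_
  simp only [Pi.zero_apply]
  show (0:ℝ) ≤ ∫ z, F (v, z) ∂((ℙ : Measure Ω).map Z)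
  have hint1 : Integrable (fun z : ℝ => |H v + (z - c)|) ((ℙ : Measure Ω).map Z) := by
    have : (fun z : ℝ => |H v + (z - c)|) = fun z : ℝ => |(H v - c) + z| := by
      funext z; ring_nf
    rw [this]
    exact ((integrable_const (H v - c)).add hZmap).abs
  have hinner : ∫ z, F (v, z) ∂((ℙ : Measure Ω).map Z)
      = G v * ((∫ z, |H v + (z - c)| ∂((ℙ : Measure Ω).map Z)) - |H v|) := by
    rw [hF]
    simp only
    rw [MeasureTheory.integral_const_mul, integral_sub hint1 (integrable_const _),
      integral_const]
    simp
  rw [hinner]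
  apply mul_nonneg (hGnn v)
  have hmean : (∫ z : ℝ, z ∂((ℙ : Measure Ω).map Z)) = c :=
    integral_map hZ.aemeasurable aestronglyMeasurable_id
  have : |H v| ≤ ∫ z, |H v + (z - c)| ∂((ℙ : Measure Ω).map Z) := by
    have habs : |∫ z, (H v + (z - c)) ∂((ℙ : Measure Ω).map Z)|
        ≤ ∫ z, |H v + (z - c)| ∂((ℙ : Measure Ω).map Z) := by
      simpa [Real.norm_eq_abs] using
        norm_integral_le_integral_norm (μ := (ℙ : Measure Ω).map Z)
          (fun z : ℝ => H v + (z - c))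
    have h2 : (∫ z : ℝ, (z - c) ∂((ℙ : Measure Ω).map Z)) = 0 := by
      rw [integral_sub hZmap (integrable_const c), hmean, integral_const]
      simp
    have heq : ∫ z, (H v + (z - c)) ∂((ℙ : Measure Ω).map Z) = H v := by
      have hadd := integral_add (μ := (ℙ : Measure Ω).map Z) (integrable_const (H v))
        (hZmap.sub (integrable_const c))
      simp only [Pi.sub_apply] at hadd
      rw [hadd, h2, integral_const]
      simp
    rw [heq] at habs
    exact habs
  linarith

lemma memℒp_max' {Ω : Type*} [MeasureSpace Ω] {f g : Ω → ℝ}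
    (hf : MeasureTheory.MemLp f 2 ℙ) (hg : MeasureTheory.MemLp g 2 ℙ) :
    MeasureTheory.MemLp (fun ω => max (f ω) (g ω)) 2 ℙ := by
  refine MeasureTheory.MemLp.of_le (hf.abs.add hg.abs) (hf.1.sup hg.1)
    (Filter.Eventually.of_forall fun ω => ?_)
  simp only [Real.norm_eq_abs, Pi.add_apply, Pi.abs_apply]
  rw [abs_of_nonneg (by positivity : (0:ℝ) ≤ |f ω| + |g ω|)]
  rcases le_total (f ω) (g ω) with h | h
  · rw [max_eq_right h]; cases abs_cases (g ω) <;> cases abs_cases (f ω) <;> linarith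
  · rw [max_eq_left h]; cases abs_cases (g ω) <;> cases abs_cases (f ω) <;> linarith

lemma integrable_mul_of_memℒp2 {Ω : Type*} [MeasureSpace Ω] {f g : Ω → ℝ}
    (hf : MeasureTheory.MemLp f 2 ℙ) (hg : MeasureTheory.MemLp g 2 ℙ) :
    MeasureTheory.Integrable (fun ω => f ω * g ω) ℙ := by
  have h : MeasureTheory.MemLp (f • g) 1 ℙ := hg.smul hf
  have h2 := memLp_one_iff_integrable.mp h
  have : (f • g : Ω → ℝ) = fun ω => f ω * g ω := by
    funext ω; simp [Pi.smul_apply', smul_eq_mul]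
  rwa [this] at h2

lemma variance_fun_sub_const {Ω : Type*} [MeasureSpace Ω] [IsProbabilityMeasure (ℙ : Measure Ω)]
    {X : Ω → ℝ} (hX : MeasureTheory.MemLp X 2 ℙ) (c : ℝ) :
    variance (fun ω => X ω - c) ℙ = variance X ℙ := by
  have hXc : MeasureTheory.MemLp (fun ω => X ω - c) 2 ℙ := hX.sub (memLp_const c)
  rw [variance_eq_sub hXc, variance_eq_sub hX]
  have h1 : ∫ ω, ((fun ω => X ω - c) ^ 2) ω ∂ℙ = ∫ ω, (X ω ^ 2 - 2 * c * X ω + c ^ 2) ∂ℙ := by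
    apply integral_congr_ae
    exact Filter.Eventually.of_forall fun ω => by simp [Pi.pow_apply]; ring
  have hXi : MeasureTheory.Integrable X ℙ := hX.integrable one_le_two
  have ia : MeasureTheory.Integrable (fun ω => X ω ^ 2 - 2 * c * X ω) ℙ :=
    hX.integrable_sq.sub (hXi.const_mul (2 * c))
  have e1 : ∫ ω, (X ω ^ 2 - 2 * c * X ω + c ^ 2) ∂ℙ
      = (∫ ω, (X ω ^ 2 - 2 * c * X ω) ∂ℙ) + c ^ 2 := by
    rw [integral_add ia (integrable_const _), integral_const]
    simp [measure_univ]
  have e2 : ∫ ω, (X ω ^ 2 - 2 * c * X ω) ∂ℙ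
      = (∫ ω, X ω ^ 2 ∂ℙ) - 2 * c * ∫ ω, X ω ∂ℙ := by
    rw [integral_sub hX.integrable_sq (hXi.const_mul (2 * c)), integral_const_mul]
  have h2 : ∫ ω, (X ω ^ 2 - 2 * c * X ω + c ^ 2) ∂ℙ
      = (∫ ω, (X ^ 2) ω ∂ℙ) - 2 * c * (∫ ω, X ω ∂ℙ) + c ^ 2 := by
    rw [e1, e2]
    simp only [Pi.pow_apply]
  have h3 : ∫ ω, (fun ω => X ω - c) ω ∂ℙ = (∫ ω, X ω ∂ℙ) - c := by
    rw [integral_sub hXi (integrable_const c), integral_const]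
    simp [measure_univ]
  rw [h1, h2, h3]
  ring


/-- Reflected random walk with IID positive-mean increments:
`E[S (k+1)] ≤ kμ + √k log₂(4k) √(σ² + S₁²/k)`. -/
theorem stmt2 {Ω : Type*} [MeasureSpace Ω] [IsProbabilityMeasure (ℙ : Measure Ω)]
    (Θ : ℕ → Ω → ℝ) (S : ℕ → Ω → ℝ) (μ σ s₁ : ℝ)
    (hmeas : ∀ i, Measurable (Θ i))
    (hindep : iIndepFun Θ ℙ)
    (hident : ∀ i j, IdentDistrib (Θ i) (Θ j) ℙ ℙ)
    (hL2 : ∀ i, MemLp (Θ i) 2 ℙ)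
    (hmean : ∀ i, ∫ ω, Θ i ω ∂ℙ = μ) (hμ : 0 < μ)
    (hvar : ∀ i, variance (Θ i) ℙ = σ ^ 2)
    (hS1 : ∀ ω, S 1 ω = s₁) (hs₁ : 0 ≤ s₁)
    (hSdyn : ∀ i ≥ 1, ∀ ω, S (i + 1) ω = max (S i ω + Θ i ω) 0) :
    ∀ k ≥ 1, ∫ ω, S (k + 1) ω ∂ℙ ≤
      k * μ + Real.sqrt k * Real.logb 2 (4 * k) * Real.sqrt (σ ^ 2 + s₁ ^ 2 / k) := by
  intro k hk
  -- the reversed centered partial sums, their absolute values, and running maxima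
  set P : ℕ → Ω → ℝ := fun m ω => s₁ + ∑ i ∈ Finset.range m, (Θ (k - i) ω - μ) with hPdef
  set A : ℕ → Ω → ℝ := fun m ω => |P m ω| with hAdef
  set Ab : ℕ → Ω → ℝ := fun m ω => dbar (fun j => A j ω) m with hAbdef
  have measP : ∀ m, Measurable (P m) := fun m =>
    measurable_const.add (Finset.measurable_sum _ fun i _ => (hmeas _).sub measurable_const)
  have measA : ∀ m, Measurable (A m) := fun m => (measP m).abs
  have measAb : ∀ m, Measurable (Ab m) := by
    intro m
    induction m with
    | zero =>
      have : Ab 0 = A 0 := by funext ω; simp [hAbdef, dbar]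
      rw [this]; exact measA 0
    | succ n ih =>
      have : Ab (n + 1) = fun ω => max (A (n + 1) ω) (Ab n ω) := by
        funext ω; exact dbar_succ _ n
      rw [this]; exact (measA _).max ih
  have memP : ∀ m, MemLp (P m) 2 ℙ := by
    intro m
    have hrw : P m = (fun _ => s₁) + ∑ i ∈ Finset.range m, (fun ω => Θ (k - i) ω - μ) := by
      funext ω
      simp only [hPdef, Pi.add_apply, Finset.sum_apply]
    rw [hrw]
    exact (memLp_const s₁).add
      (memLp_finset_sum' _ fun i _ => (hL2 _).sub (memLp_const μ))
  have memA : ∀ m, MemLp (A m) 2 ℙ := fun m => (memP m).abs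
  have memAb : ∀ m, MemLp (Ab m) 2 ℙ := by
    intro m
    induction m with
    | zero =>
      have : Ab 0 = A 0 := by funext ω; simp [hAbdef, dbar]
      rw [this]; exact memA 0
    | succ n ih =>
      have : Ab (n + 1) = fun ω => max (A (n + 1) ω) (Ab n ω) := by
        funext ω; exact dbar_succ _ n
      rw [this]; exact memℒp_max' (memA _) ih
  have hAnn : ∀ m ω, 0 ≤ A m ω := fun m ω => abs_nonneg _
  have hAbnn : ∀ m ω, 0 ≤ Ab m ω := fun m ω => dbar_nonneg (fun j => hAnn j ω) m
  -- pointwise bound : S (k+1) ≤ k μ + Ab k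
  have key_pt : ∀ ω, S (k + 1) ω ≤ k * μ + Ab k ω := by
    -- raw partial sums
    set T : ℕ → Ω → ℝ := fun j ω => ∑ i ∈ Finset.range j, Θ (i + 1) ω with hTdef
    set R : ℕ → Ω → ℝ := fun j ω => (Finset.range (j + 1)).sup' Finset.nonempty_range_add_one
      (fun i => (if i = 0 then s₁ else 0) + (T j ω - T i ω)) with hRdef
    have hTstep : ∀ j ω, T (j + 1) ω = T j ω + Θ (j + 1) ω := by
      intro j ω
      simp only [hTdef]
      rw [Finset.sum_range_succ]
    have hRle : ∀ j ω i, i ∈ Finset.range (j + 1) →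
        (if i = 0 then s₁ else 0) + (T j ω - T i ω) ≤ R j ω := by
      intro j ω i hi
      simp only [hRdef]
      exact Finset.le_sup' (fun i => (if i = 0 then s₁ else 0) + (T j ω - T i ω)) hi
    have hRle_all : ∀ j ω (c : ℝ),
        (∀ i ∈ Finset.range (j + 1), (if i = 0 then s₁ else 0) + (T j ω - T i ω) ≤ c) →
        R j ω ≤ c := by
      intro j ω c h
      simp only [hRdef]
      exact Finset.sup'_le _ _ h
    have claim1 : ∀ j, 1 ≤ j → ∀ ω, S (j + 1) ω ≤ R j ω := by
      intro j hj
      induction j, hj using Nat.le_induction with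
      | base =>
        intro ω
        rw [hSdyn 1 le_rfl ω, hS1 ω]
        have e0 : (if (0:ℕ) = 0 then s₁ else 0) + (T 1 ω - T 0 ω) = s₁ + Θ 1 ω := by
          simp only [hTdef, if_pos rfl]
          rw [Finset.sum_range_one, Finset.sum_range_zero]
          norm_num
        have e1 : (if (1:ℕ) = 0 then s₁ else 0) + (T 1 ω - T 1 ω) = 0 := by norm_num
        apply max_le
        · rw [← e0]; exact hRle 1 ω 0 (by simp)
        · rw [← e1]; exact hRle 1 ω 1 (by simp)
      | succ n hn ih =>
        intro ω
        rw [hSdyn (n + 1) (by omega) ω]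
        apply max_le
        · have h1 : S (n + 1) ω + Θ (n + 1) ω ≤ R n ω + Θ (n + 1) ω := by linarith [ih ω]
          refine h1.trans ?_
          have h2 : R n ω ≤ R (n + 1) ω - Θ (n + 1) ω := by
            apply hRle_all
            intro i hi
            have hi' : i ∈ Finset.range (n + 1 + 1) := by
              simp only [Finset.mem_range] at hi ⊢; omega
            have h3 := hRle (n + 1) ω i hi'
            rw [hTstep n ω] at h3
            linarith
          linarith
        · have h4 := hRle (n + 1) ω (n + 1) (by simp)
          simpa using h4
    have hsumrw : ∀ i, i ≤ k → ∀ ω,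
        T k ω - T i ω = ∑ l ∈ Finset.range (k - i), Θ (k - l) ω := by
      intro i hi ω
      have h1 : T k ω - T i ω = ∑ l ∈ Finset.Ico i k, Θ (l + 1) ω := by
        rw [hTdef]
        simp only
        rw [Finset.sum_Ico_eq_sub _ hi]
      rw [h1]
      refine (Finset.sum_nbij' (fun l => k - 1 - l) (fun l => k - 1 - l) ?_ ?_ ?_ ?_ ?_).symm
      · intro a ha
        simp only [Finset.mem_range] at ha
        show k - 1 - a ∈ Finset.Ico i k
        simp only [Finset.mem_Ico]
        omega
      · intro a ha
        simp only [Finset.mem_Ico] at ha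
        show k - 1 - a ∈ Finset.range (k - i)
        simp only [Finset.mem_range]
        omega
      · intro a ha
        simp only [Finset.mem_range] at ha
        show k - 1 - (k - 1 - a) = a
        omega
      · intro a ha
        simp only [Finset.mem_Ico] at ha
        show k - 1 - (k - 1 - a) = a
        omega
      · intro a ha
        simp only [Finset.mem_range] at ha
        show Θ (k - a) ω = Θ ((k - 1 - a) + 1) ω
        congr 1
        omega
    have hPrw : ∀ i, i ≤ k → ∀ ω,
        P (k - i) ω = s₁ + (T k ω - T i ω) - ((k : ℝ) - i) * μ := by
      intro i hi ω
      rw [hsumrw i hi ω]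
      simp only [hPdef]
      rw [Finset.sum_sub_distrib, Finset.sum_const, Finset.card_range, nsmul_eq_mul,
        Nat.cast_sub hi]
      ring
    have claim2 : ∀ ω, R k ω ≤ k * μ + Ab k ω := by
      intro ω
      apply hRle_all
      intro i hi
      have hik : i ≤ k := by simp only [Finset.mem_range] at hi; omega
      have h1 : (if i = 0 then s₁ else 0) ≤ s₁ := by split <;> simp [hs₁]
      have h2 : ((k : ℝ) - i) * μ ≤ (k : ℝ) * μ := by
        apply mul_le_mul_of_nonneg_right _ hμ.le
        have : (0:ℝ) ≤ (i:ℝ) := by positivity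
        linarith
      have h3 : P (k - i) ω ≤ Ab k ω := by
        refine (le_abs_self _).trans ?_
        exact le_dbar (fun j => A j ω) (Nat.sub_le k i)
      have h4 := hPrw i hik ω
      linarith
    intro ω
    exact (claim1 k hk ω).trans (claim2 ω)
  -- cross terms are nonnegative
  have crossm : ∀ m ∈ Finset.range k, 0 ≤ ∫ ω, Ab m ω * (A (m + 1) ω - A m ω) ∂ℙ := by
    intro m hm
    have hmk : m < k := Finset.mem_range.mp hm
    set V : Ω → (Fin m → ℝ) := fun ω i => Θ (k - (i : ℕ)) ω with hVdef
    set Z : Ω → ℝ := Θ (k - m) with hZdef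
    set Hf : ℕ → (Fin m → ℝ) → ℝ :=
      fun j v => s₁ + ∑ i : Fin m, (if (i : ℕ) < j then v i - μ else 0) with hHfdef
    have measHf : ∀ j, Measurable (Hf j) := by
      intro j
      apply measurable_const.add
      apply Finset.measurable_sum
      intro i _
      by_cases h : (i : ℕ) < j
      · simp only [if_pos h]
        exact (measurable_pi_apply i).sub measurable_const
      · simp only [if_neg h]
        exact measurable_const
    have hHfP : ∀ j, j ≤ m → ∀ ω, Hf j (V ω) = P j ω := by
      intro j hj ω
      simp only [hHfdef, hVdef, hPdef]
      congr 1
      rw [Fin.sum_univ_eq_sum_range (fun i => if i < j then Θ (k - i) ω - μ else 0) m]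
      calc ∑ i ∈ Finset.range m, (if i < j then Θ (k - i) ω - μ else 0)
          = ∑ i ∈ Finset.range j, (if i < j then Θ (k - i) ω - μ else 0) :=
            (Finset.sum_subset (Finset.range_subset_range.mpr hj) (fun x _ hxn => by
              rw [if_neg]
              simp only [Finset.mem_range] at hxn
              omega)).symm
        _ = ∑ i ∈ Finset.range j, (Θ (k - i) ω - μ) :=
            Finset.sum_congr rfl fun i hi => if_pos (Finset.mem_range.mp hi)
    have hA1 : ∀ ω, A (m + 1) ω = |P m ω + (Z ω - μ)| := by
      intro ω
      simp only [hAdef]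
      congr 1
      simp only [hPdef, hZdef]
      rw [Finset.sum_range_succ]
      ring
    set G : (Fin m → ℝ) → ℝ := fun v => dbar (fun j => |Hf j v|) m with hGdef
    have measG : Measurable G := by
      have key : ∀ n, Measurable (fun v : Fin m → ℝ => dbar (fun j => |Hf j v|) n) := by
        intro n
        induction n with
        | zero =>
          have e : (fun v : Fin m → ℝ => dbar (fun j => |Hf j v|) 0)
              = fun v => |Hf 0 v| := by
            funext v; simp [dbar]
          rw [e]; exact (measHf 0).abs
        | succ n ih =>
          have e : (fun v : Fin m → ℝ => dbar (fun j => |Hf j v|) (n + 1))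
              = fun v => max (|Hf (n + 1) v|) (dbar (fun j => |Hf j v|) n) := by
            funext v; exact dbar_succ _ n
          rw [e]; exact (measHf _).abs.max ih
      exact key m
    have hGV : ∀ ω, G (V ω) = Ab m ω := by
      intro ω
      simp only [hGdef, hAbdef]
      apply dbar_congr
      intro j hj
      rw [hHfP j hj ω]
    have hGnn : ∀ v, 0 ≤ G v := fun v => dbar_nonneg (fun j => abs_nonneg _) m
    have hGVint : Integrable (fun ω => G (V ω)) ℙ := by
      have e : (fun ω => G (V ω)) = Ab m := funext hGV
      rw [e]; exact (memAb m).integrable one_le_two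
    have hVmeas : Measurable V := measurable_pi_lambda _ fun i => hmeas _
    have hindepVZ : IndepFun V Z ℙ := by
      set Sf : Finset ℕ := Finset.Ioc (k - m) k with hSf
      set Tf : Finset ℕ := {k - m} with hTf
      have hdisj : Disjoint Sf Tf := by
        rw [hTf, Finset.disjoint_singleton_right]
        simp only [hSf, Finset.mem_Ioc]
        omega
      have hbase := hindep.indepFun_finset Sf Tf hdisj hmeas
      have hmem : ∀ i : Fin m, k - (i : ℕ) ∈ Sf := by
        intro i
        have hilt := i.isLt
        simp only [hSf, Finset.mem_Ioc]
        omega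
      set r : (Sf → ℝ) → (Fin m → ℝ) := fun v i => v ⟨k - (i : ℕ), hmem i⟩ with hrdef
      have hrmeas : Measurable r := measurable_pi_lambda _ fun i => measurable_pi_apply _
      set e : (Tf → ℝ) → ℝ := fun v => v ⟨k - m, by simp [hTf]⟩ with hedef
      have hemeas : Measurable e := measurable_pi_apply _
      have hcomp := hbase.comp hrmeas hemeas
      have h1 : r ∘ (fun ω (i : Sf) => Θ (i : ℕ) ω) = V := by
        funext ω
        funext i
        rfl
      have h2 : e ∘ (fun ω (i : Tf) => Θ (i : ℕ) ω) = Z := by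
        funext ω
        rfl
      rwa [h1, h2] at hcomp
    have hZint : Integrable Z ℙ := (hL2 _).integrable one_le_two
    have hcross := cross_nonneg V Z hVmeas (hmeas _) hindepVZ hZint G (Hf m) measG
      (measHf m) hGnn hGVint
    have hZmean : (∫ z, Z z ∂ℙ) = μ := hmean (k - m)
    have hintegrand : (fun ω => Ab m ω * (A (m + 1) ω - A m ω))
        = fun ω => G (V ω) * (|Hf m (V ω) + (Z ω - ∫ z, Z z ∂ℙ)| - |Hf m (V ω)|) := by
      funext ω
      rw [hZmean, hGV ω, hHfP m le_rfl ω, hA1 ω]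
    rw [hintegrand]
    exact hcross
  have intAbA : ∀ m, Integrable (fun ω => Ab m ω * (A (m + 1) ω - A m ω)) ℙ :=
    fun m => integrable_mul_of_memℒp2 (memAb m) ((memA (m + 1)).sub (memA m))
  -- Doob's L² bound
  have EAb2 : ∫ ω, (Ab k ω) ^ 2 ∂ℙ ≤ 4 * ∫ ω, (A k ω) ^ 2 ∂ℙ := by
    have pt : ∀ ω, (Ab k ω) ^ 2 ≤
        4 * (A k ω) ^ 2 - 4 * ∑ m ∈ Finset.range k, Ab m ω * (A (m + 1) ω - A m ω) :=
      fun ω => pathDoob (fun n => hAnn n ω) k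
    have hintsum : Integrable (fun ω => ∑ m ∈ Finset.range k, Ab m ω * (A (m + 1) ω - A m ω)) ℙ :=
      integrable_finset_sum _ fun m _ => intAbA m
    have hintR : Integrable
        (fun ω => 4 * (A k ω) ^ 2 - 4 * ∑ m ∈ Finset.range k, Ab m ω * (A (m + 1) ω - A m ω)) ℙ :=
      ((memA k).integrable_sq.const_mul 4).sub (hintsum.const_mul 4)
    have h1 := integral_mono (memAb k).integrable_sq hintR pt
    have h2 : ∫ ω, (4 * (A k ω) ^ 2
          - 4 * ∑ m ∈ Finset.range k, Ab m ω * (A (m + 1) ω - A m ω)) ∂ℙ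
        = 4 * (∫ ω, (A k ω) ^ 2 ∂ℙ)
          - 4 * ∑ m ∈ Finset.range k, ∫ ω, Ab m ω * (A (m + 1) ω - A m ω) ∂ℙ := by
      rw [integral_sub (((memA k).integrable_sq).const_mul 4) (hintsum.const_mul 4),
        integral_const_mul, integral_const_mul, integral_finset_sum _ fun m _ => intAbA m]
    have h3 : 0 ≤ ∑ m ∈ Finset.range k, ∫ ω, Ab m ω * (A (m + 1) ω - A m ω) ∂ℙ :=
      Finset.sum_nonneg crossm
    rw [h2] at h1
    linarith
  -- second moment of the endpoint
  have EA2 : ∫ ω, (A k ω) ^ 2 ∂ℙ = k * σ ^ 2 + s₁ ^ 2 := by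
    set W : Ω → ℝ := fun ω => ∑ i ∈ Finset.range k, Θ (k - i) ω with hWdef
    have memW : MemLp W 2 ℙ := by
      have : W = ∑ i ∈ Finset.range k, (fun ω => Θ (k - i) ω) := by
        funext ω; simp [hWdef, Finset.sum_apply]
      rw [this]
      exact memLp_finset_sum' _ fun i _ => hL2 _
    have hPk : P k = fun ω => W ω - ((k : ℝ) * μ - s₁) := by
      funext ω
      simp only [hPdef, hWdef]
      rw [Finset.sum_sub_distrib, Finset.sum_const, Finset.card_range, nsmul_eq_mul]
      ring
    have hWsum : W = ∑ j ∈ Finset.Icc 1 k, Θ j := by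
      funext ω
      rw [hWdef, Finset.sum_apply]
      refine Finset.sum_nbij' (fun i => k - i) (fun j => k - j) ?_ ?_ ?_ ?_ ?_
      · intro a ha
        simp only [Finset.mem_range] at ha
        show k - a ∈ Finset.Icc 1 k
        simp only [Finset.mem_Icc]
        omega
      · intro a ha
        simp only [Finset.mem_Icc] at ha
        show k - a ∈ Finset.range k
        simp only [Finset.mem_range]
        omega
      · intro a ha
        simp only [Finset.mem_range] at ha
        show k - (k - a) = a
        omega
      · intro a ha
        simp only [Finset.mem_Icc] at ha
        show k - (k - a) = a
        omega
      · intro a ha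
        rfl
    have hvarW : variance W ℙ = k * σ ^ 2 := by
      rw [hWsum, IndepFun.variance_sum (fun j _ => hL2 j)
        (fun i _ j _ hij => hindep.indepFun hij)]
      rw [Finset.sum_congr rfl fun j _ => hvar j, Finset.sum_const, nsmul_eq_mul,
        Nat.card_Icc]
      norm_num
    have hvarPk : variance (P k) ℙ = k * σ ^ 2 := by
      rw [hPk, variance_fun_sub_const memW _]
      exact hvarW
    have hEPk : ∫ ω, P k ω ∂ℙ = s₁ := by
      have hint : ∀ i : ℕ, Integrable (fun ω => Θ (k - i) ω - μ) ℙ :=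
        fun i => ((hL2 _).integrable one_le_two).sub (integrable_const μ)
      have h1 : ∫ ω, P k ω ∂ℙ
          = ∫ ω, (s₁ + ∑ i ∈ Finset.range k, (Θ (k - i) ω - μ)) ∂ℙ := rfl
      rw [h1, integral_add (integrable_const s₁)
        (integrable_finset_sum _ fun i _ => hint i), integral_const,
        integral_finset_sum _ fun i _ => hint i]
      have h2 : ∀ i ∈ Finset.range k, ∫ ω, (Θ (k - i) ω - μ) ∂ℙ = 0 := by
        intro i _
        rw [integral_sub ((hL2 _).integrable one_le_two) (integrable_const μ),
          hmean, integral_const]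
        simp [measure_univ]
      rw [Finset.sum_eq_zero h2]
      simp [measure_univ]
    have hvd := variance_eq_sub (memP k)
    rw [hvarPk, hEPk] at hvd
    have hPsq : ∫ ω, ((P k) ^ 2) ω ∂ℙ = ∫ ω, (A k ω) ^ 2 ∂ℙ := by
      apply integral_congr_ae
      exact Filter.Eventually.of_forall fun ω => by
        simp only [Pi.pow_apply, hAdef, sq_abs]
    rw [hPsq] at hvd
    linarith
  -- first moment of the running maximum
  have EAb : ∫ ω, Ab k ω ∂ℙ ≤ 2 * Real.sqrt (k * σ ^ 2 + s₁ ^ 2) := by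
    have hv := variance_nonneg (Ab k) ℙ
    rw [variance_eq_sub (memAb k)] at hv
    have hsq : (∫ ω, Ab k ω ∂ℙ) ^ 2 ≤ ∫ ω, (Ab k ω) ^ 2 ∂ℙ := by
      have : ∫ ω, ((Ab k) ^ 2) ω ∂ℙ = ∫ ω, (Ab k ω) ^ 2 ∂ℙ := by
        apply integral_congr_ae; exact Filter.Eventually.of_forall fun ω => by simp
      linarith [hv, this]
    have hnn : 0 ≤ ∫ ω, Ab k ω ∂ℙ := integral_nonneg fun ω => hAbnn k ω
    have h4 : ∫ ω, (Ab k ω) ^ 2 ∂ℙ ≤ 4 * (k * σ ^ 2 + s₁ ^ 2) := by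
      rw [EA2] at EAb2; linarith
    calc ∫ ω, Ab k ω ∂ℙ = Real.sqrt ((∫ ω, Ab k ω ∂ℙ) ^ 2) := (Real.sqrt_sq hnn).symm
      _ ≤ Real.sqrt (4 * (k * σ ^ 2 + s₁ ^ 2)) := Real.sqrt_le_sqrt (by linarith)
      _ = 2 * Real.sqrt (k * σ ^ 2 + s₁ ^ 2) := by
          rw [show (4 : ℝ) * (k * σ ^ 2 + s₁ ^ 2) = 2 ^ 2 * (k * σ ^ 2 + s₁ ^ 2) by norm_num,
            Real.sqrt_mul (by positivity), Real.sqrt_sq (by norm_num)]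
  -- integrability of S (k+1)
  have hSmeas : ∀ j, 1 ≤ j → Measurable (S (j + 1)) := by
    intro j hj
    induction j, hj using Nat.le_induction with
    | base =>
      have : S 2 = fun ω => max (s₁ + Θ 1 ω) 0 := by
        funext ω; rw [hSdyn 1 le_rfl ω, hS1 ω]
      rw [this]
      exact (measurable_const.add (hmeas 1)).max measurable_const
    | succ n hn ih =>
      have : S (n + 1 + 1) = fun ω => max (S (n + 1) ω + Θ (n + 1) ω) 0 := by
        funext ω; exact hSdyn (n + 1) (by omega) ω
      rw [this]
      exact (ih.add (hmeas _)).max measurable_const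
  have hSnn : ∀ ω, 0 ≤ S (k + 1) ω := by
    intro ω; rw [hSdyn k hk ω]; exact le_max_right _ _
  have hAbint : Integrable (Ab k) ℙ := (memAb k).integrable one_le_two
  have hbound_int : Integrable (fun ω => k * μ + Ab k ω) ℙ := (integrable_const _).add hAbint
  have hSint : Integrable (S (k + 1)) ℙ := by
    refine hbound_int.mono' (hSmeas k hk).aestronglyMeasurable
      (Filter.Eventually.of_forall fun ω => ?_)
    rw [Real.norm_eq_abs, abs_of_nonneg (hSnn ω)]
    exact key_pt ω
  have hES : ∫ ω, S (k + 1) ω ∂ℙ ≤ k * μ + 2 * Real.sqrt (k * σ ^ 2 + s₁ ^ 2) := by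
    have h1 : ∫ ω, S (k + 1) ω ∂ℙ ≤ ∫ ω, (k * μ + Ab k ω) ∂ℙ :=
      integral_mono hSint hbound_int key_pt
    have h2 : ∫ ω, (k * μ + Ab k ω) ∂ℙ = k * μ + ∫ ω, Ab k ω ∂ℙ := by
      rw [integral_add (integrable_const _) hAbint, integral_const]
      simp [measure_univ]
    linarith [EAb]
  -- final numeric comparison
  refine hES.trans ?_
  have hk1 : (1 : ℝ) ≤ (k : ℝ) := by exact_mod_cast hk
  have hkpos : (0 : ℝ) < (k : ℝ) := by linarith
  have hlogb : (2 : ℝ) ≤ Real.logb 2 (4 * k) := by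
    rw [Real.le_logb_iff_rpow_le one_lt_two (by positivity)]
    rw [show ((2 : ℝ) ^ (2 : ℝ)) = 4 by
      rw [show ((2:ℝ) : ℝ) = ((2:ℕ) : ℝ) by norm_num, Real.rpow_natCast]; norm_num]
    linarith
  have hsqrt_eq : Real.sqrt k * Real.sqrt (σ ^ 2 + s₁ ^ 2 / k)
      = Real.sqrt (k * σ ^ 2 + s₁ ^ 2) := by
    rw [← Real.sqrt_mul (by positivity)]
    congr 1
    field_simp
  have hσnn : (0 : ℝ) ≤ k * σ ^ 2 + s₁ ^ 2 := by positivity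
  have : 2 * Real.sqrt (k * σ ^ 2 + s₁ ^ 2)
      ≤ Real.sqrt k * Real.logb 2 (4 * k) * Real.sqrt (σ ^ 2 + s₁ ^ 2 / k) := by
    rw [show Real.sqrt k * Real.logb 2 (4 * k) * Real.sqrt (σ ^ 2 + s₁ ^ 2 / k)
        = Real.logb 2 (4 * k) * (Real.sqrt k * Real.sqrt (σ ^ 2 + s₁ ^ 2 / k)) by ring,
      hsqrt_eq]
    exact mul_le_mul_of_nonneg_right hlogb (Real.sqrt_nonneg _)
  linarith
end

section
/- Let $\Delta_1,\Delta_2,\ldots$ be IID zero-mean random variables with finite variance, and let $\alpha = \alpha_c \alpha_d \in (0,1)$ with $\alpha_c,\alpha_d \in (0,1)$. Define the storage sequence $S_{i+1} = \max\{S_i + \alpha_c \Delta_i^+ - \Delta_i^- /\alpha_d, 0\}$ with $S_1 \ge 0$, and the generation $G_i = \Delta_i^- - \alpha\Delta_i^+ + \alpha_d(S_{i+1} - S_i)$ where $x^+ = \max\{x,0\}$ and $x^- = \max\{-x,0\}$. Then $\lim_{n\to\infty} \mathbb{E}[\frac{1}{n}\sum_{i=1}^n G_i] = (1-\alpha)\,\mathbb{E}[\Delta_1^-]$.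 -/
open MeasureTheory ProbabilityTheory Filter Topology

/-!
With `Xᵢ = αc Δᵢ⁺ - Δᵢ⁻ / αd`, the storage level is the reflected random walk
`S_{n+1} = max (S_n + X_n) 0`, whose IID increments have mean `(αc - 1 / αd) E[Δ⁻] ≤ 0`.
As `S_n` depends only on `X_1, …, X_{n-1}`, it is independent of `X_n`, so `E[S_n X_n] ≤ 0` and
`E[S_{n+1}²] ≤ E[S_n²] + E[X_n²]`. Hence `E[S_n]² ≤ E[S_n²] = O(n)`, and the boundary term
`αd (E[S_{n+1}] - s₁) / n` of the telescoped average generation tends to `0`.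
-/

lemma tendsto_div_natCast_zero_of_sq_le {a : ℕ → ℝ} {b c : ℝ} (h : ∀ n, a n ^ 2 ≤ b + n * c) :
    Tendsto (fun n : ℕ => a n / n) atTop (𝓝 0) := by
  have hbound : Tendsto (fun n : ℕ => (b / n + c) / n) atTop (𝓝 0) := by
    have := (tendsto_const_div_atTop_nhds_zero_nat b).add_const c
    exact this.div_atTop tendsto_natCast_atTop_atTop
  have hsq : Tendsto (fun n : ℕ => (a n / n) ^ 2) atTop (𝓝 0) := by
    refine squeeze_zero' (.of_forall fun n => sq_nonneg _) ?_ hbound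
    filter_upwards [eventually_gt_atTop 0] with n hn
    have hn' : (0 : ℝ) < n := Nat.cast_pos.2 hn
    rw [div_pow, div_add' _ _ _ hn'.ne', div_div, ← sq]
    exact div_le_div_of_nonneg_right (by linarith [h n]) (sq_nonneg _)
  rw [tendsto_zero_iff_abs_tendsto_zero]
  simpa [Function.comp_def, Real.sqrt_sq_eq_abs] using hsq.sqrt

noncomputable def reflectedWalk {Ω : Type*} (X : ℕ → Ω → ℝ) (s : ℝ) : ℕ → Ω → ℝ
  | 0 => fun _ => s
  | n + 1 => fun ω => max (reflectedWalk X s n ω + X n ω) 0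

section ReflectedWalk

variable {Ω : Type*} {X : ℕ → Ω → ℝ} {s : ℝ}

lemma eq_reflectedWalk {S Y : ℕ → Ω → ℝ} (h1 : ∀ ω, S 1 ω = s)
    (hS : ∀ i ≥ 1, ∀ ω, S (i + 1) ω = max (S i ω + Y i ω) 0) (n : ℕ) :
    S (n + 1) = reflectedWalk (fun i => Y (i + 1)) s n := by
  induction n with
  | zero => exact funext h1
  | succ n ih =>
    funext ω
    rw [hS (n + 1) n.succ_pos ω, ih]
    rfl

lemma reflectedWalk_nonneg_s4 (hs : 0 ≤ s) : ∀ n ω, 0 ≤ reflectedWalk X s n ω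
  | 0, _ => hs
  | _ + 1, _ => le_max_right _ _

lemma measurable_reflectedWalk_past (n : ℕ) :
    Measurable[⨆ i ∈ Set.Iio n, MeasurableSpace.comap (X i) inferInstance]
      (reflectedWalk X s n) := by
  induction n with
  | zero => exact measurable_const
  | succ n ih =>
    have hX : Measurable[⨆ i ∈ Set.Iio (n + 1), MeasurableSpace.comap (X i) inferInstance]
        (X n) :=
      (comap_measurable (X n)).mono
        (le_biSup (fun i => MeasurableSpace.comap (X i) inferInstance) n.lt_succ_self) le_rfl
    have hW := ih.mono (biSup_mono fun i hi => (Set.mem_Iio.1 hi).trans n.lt_succ_self) le_rfl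
    exact (hW.add hX).max measurable_const

variable [MeasurableSpace Ω] {μ : Measure Ω}

lemma indepFun_reflectedWalk (hX : ∀ i, Measurable (X i)) (hind : iIndepFun X μ) (n : ℕ) :
    IndepFun (reflectedWalk X s n) (X n) μ := by
  have h := indep_iSup_of_disjoint (fun i => (hX i).comap_le) hind
    (S := Set.Iio n) (Set.disjoint_singleton_right.2 (lt_irrefl n))
  rw [iSup_singleton] at h
  exact indep_of_indep_of_le_left h (measurable_reflectedWalk_past n).comap_le

lemma memLp_reflectedWalk [IsFiniteMeasure μ] {p} (hX : ∀ i, MemLp (X i) p μ) (n : ℕ) :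
    MemLp (reflectedWalk X s n) p μ := by
  induction n with
  | zero => exact memLp_const s
  | succ n ih => exact (ih.add (hX n)).sup (memLp_const 0)

lemma integral_sq_max_add_le {W Y : Ω → ℝ} (hW : MemLp W 2 μ) (hY : MemLp Y 2 μ)
    (hW0 : ∀ ω, 0 ≤ W ω) (hY0 : ∫ ω, Y ω ∂μ ≤ 0) (hind : IndepFun W Y μ) :
    ∫ ω, max (W ω + Y ω) 0 ^ 2 ∂μ ≤ ∫ ω, W ω ^ 2 ∂μ + ∫ ω, Y ω ^ 2 ∂μ := by
  have hWY : Integrable (fun ω => W ω * Y ω) μ := hW.integrable_mul hY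
  have hcov : ∫ ω, W ω * Y ω ∂μ = (∫ ω, W ω ∂μ) * ∫ ω, Y ω ∂μ :=
    hind.integral_mul_eq_mul_integral hW.1 hY.1
  calc ∫ ω, max (W ω + Y ω) 0 ^ 2 ∂μ ≤ ∫ ω, (W ω + Y ω) ^ 2 ∂μ := by
        refine integral_mono_of_nonneg (.of_forall fun ω => sq_nonneg _)
          (hW.add hY).integrable_sq (.of_forall fun ω => ?_)
        rcases le_total (W ω + Y ω) 0 with h | h <;> simp [h, sq_nonneg]
    _ = ∫ ω, (W ω ^ 2 + 2 * (W ω * Y ω)) + Y ω ^ 2 ∂μ := by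
        congr 1 with ω
        ring
    _ = ∫ ω, W ω ^ 2 ∂μ + 2 * ((∫ ω, W ω ∂μ) * ∫ ω, Y ω ∂μ) + ∫ ω, Y ω ^ 2 ∂μ := by
        have hWsq_add : Integrable (fun ω => W ω ^ 2 + 2 * (W ω * Y ω)) μ :=
          hW.integrable_sq.add (hWY.const_mul 2)
        rw [integral_add hWsq_add hY.integrable_sq,
          integral_add hW.integrable_sq (hWY.const_mul 2), integral_const_mul, hcov]
    _ ≤ ∫ ω, W ω ^ 2 ∂μ + ∫ ω, Y ω ^ 2 ∂μ := by
        have hW_int_nonneg : 0 ≤ ∫ ω, W ω ∂μ := integral_nonneg hW0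
        nlinarith

end ReflectedWalk

section ReflectedWalkMoments

variable {Ω : Type*} [MeasurableSpace Ω] {μ : Measure Ω} [IsProbabilityMeasure μ]

lemma sq_integral_le_integral_sq {f : Ω → ℝ} (hf : MemLp f 2 μ) :
    (∫ ω, f ω ∂μ) ^ 2 ≤ ∫ ω, f ω ^ 2 ∂μ := by
  have h := variance_nonneg f μ
  rw [variance_eq_sub hf] at h
  simpa [sub_nonneg] using h

variable {X : ℕ → Ω → ℝ} {s C : ℝ}

lemma integral_sq_reflectedWalk_le (hs : 0 ≤ s) (hXm : ∀ i, Measurable (X i))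
    (hind : iIndepFun X μ) (hX : ∀ i, MemLp (X i) 2 μ) (hmean : ∀ i, ∫ ω, X i ω ∂μ ≤ 0)
    (hC : ∀ i, ∫ ω, X i ω ^ 2 ∂μ ≤ C) (n : ℕ) :
    ∫ ω, reflectedWalk X s n ω ^ 2 ∂μ ≤ s ^ 2 + n * C := by
  induction n with
  | zero => simp [reflectedWalk]
  | succ n ih =>
    calc ∫ ω, reflectedWalk X s (n + 1) ω ^ 2 ∂μ
        ≤ ∫ ω, reflectedWalk X s n ω ^ 2 ∂μ + ∫ ω, X n ω ^ 2 ∂μ :=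
          integral_sq_max_add_le (memLp_reflectedWalk hX n) (hX n) (reflectedWalk_nonneg_s4 hs n)
            (hmean n) (indepFun_reflectedWalk hXm hind n)
      _ ≤ s ^ 2 + (n + 1 : ℕ) * C := by
          push_cast
          linarith [hC n]

lemma tendsto_integral_reflectedWalk_div (hs : 0 ≤ s) (hXm : ∀ i, Measurable (X i))
    (hind : iIndepFun X μ) (hX : ∀ i, MemLp (X i) 2 μ) (hmean : ∀ i, ∫ ω, X i ω ∂μ ≤ 0)
    (hC : ∀ i, ∫ ω, X i ω ^ 2 ∂μ ≤ C) :
    Tendsto (fun n : ℕ => (∫ ω, reflectedWalk X s n ω ∂μ) / n) atTop (𝓝 0) :=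
  tendsto_div_natCast_zero_of_sq_le fun n =>
    (sq_integral_le_integral_sq (memLp_reflectedWalk hX n)).trans
      (integral_sq_reflectedWalk_le hs hXm hind hX hmean hC n)

end ReflectedWalkMoments

noncomputable def storageIncrement (αc αd x : ℝ) : ℝ := αc * max x 0 - max (-x) 0 / αd

section StorageIncrement

variable {Ω : Type*} [MeasurableSpace Ω] {μ : Measure Ω} {αc αd : ℝ} {f : Ω → ℝ}

lemma measurable_storageIncrement : Measurable (storageIncrement αc αd) := by
  unfold storageIncrement
  fun_prop

lemma memLp_storageIncrement [IsFiniteMeasure μ] {p} (hf : MemLp f p μ) :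
    MemLp (fun ω => storageIncrement αc αd (f ω)) p μ :=
  ((hf.sup (memLp_const 0)).const_mul αc).sub ((hf.neg.sup (memLp_const 0)).mul_const αd⁻¹)

lemma integral_max_zero_eq_integral_max_neg_zero (hf : Integrable f μ) (h0 : ∫ ω, f ω ∂μ = 0) :
    ∫ ω, max (f ω) 0 ∂μ = ∫ ω, max (-f ω) 0 ∂μ := by
  rw [← sub_eq_zero, ← integral_sub hf.pos_part hf.neg_part]
  simpa only [max_zero_sub_eq_self] using h0

lemma integral_storageIncrement_nonpos (hαd : 0 < αd) (hα : αc * αd ≤ 1) (hf : Integrable f μ)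
    (h0 : ∫ ω, f ω ∂μ = 0) : ∫ ω, storageIncrement αc αd (f ω) ∂μ ≤ 0 := by
  have hm : 0 ≤ ∫ ω, max (-f ω) 0 ∂μ := integral_nonneg fun ω => le_max_right _ _
  have hαc : αc ≤ 1 / αd := by rwa [le_div_iff₀ hαd]
  unfold storageIncrement
  rw [integral_sub (hf.pos_part.const_mul αc) (hf.neg_part.div_const αd), integral_const_mul,
    integral_div, integral_max_zero_eq_integral_max_neg_zero hf h0, div_eq_mul_one_div _ αd,
    mul_comm _ (1 / αd), ← sub_mul]
  exact mul_nonpos_of_nonpos_of_nonneg (by linarith) hm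

end StorageIncrement

lemma integral_average_eq_of_telescoping {Ω : Type*} [MeasurableSpace Ω] {μ : Measure Ω}
    [IsProbabilityMeasure μ] {G a S : ℕ → Ω → ℝ} {c e s : ℝ} {n : ℕ} (hn : 1 ≤ n)
    (hG : ∀ i ≥ 1, ∀ ω, G i ω = a i ω + c * (S (i + 1) ω - S i ω))
    (ha : ∀ i, Integrable (a i) μ) (hEa : ∀ i, ∫ ω, a i ω ∂μ = e) (hS1 : ∀ ω, S 1 ω = s)
    (hS : Integrable (S (n + 1)) μ) :
    ∫ ω, (1 / (n : ℝ)) * ∑ i ∈ Finset.Icc 1 n, G i ω ∂μ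
      = e + c * ((∫ ω, S (n + 1) ω ∂μ) / n) - c * s / n := by
  have hsum : ∀ ω, ∑ i ∈ Finset.Icc 1 n, G i ω
      = ∑ i ∈ Finset.Icc 1 n, a i ω + c * (S (n + 1) ω - s) := fun ω => by
    rw [Finset.sum_congr rfl fun i hi => hG i (Finset.mem_Icc.1 hi).1 ω, Finset.sum_add_distrib,
      ← Finset.mul_sum, Finset.sum_Icc_sub (f := fun i => S i ω) hn, hS1]
  have hSs : Integrable (fun ω => c * (S (n + 1) ω - s)) μ :=
    (hS.sub (integrable_const s)).const_mul c
  have hn0 : (n : ℝ) ≠ 0 := by positivity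
  simp only [hsum]
  rw [integral_const_mul, integral_add (integrable_finsetSum _ fun i _ => ha i) hSs,
    integral_finsetSum _ fun i _ => ha i, Finset.sum_congr rfl fun i _ => hEa i,
    integral_const_mul, integral_sub hS (integrable_const s)]
  simp only [Finset.sum_const, Nat.card_Icc, Nat.add_sub_cancel, integral_const, probReal_univ,
    nsmul_eq_mul, smul_eq_mul, one_mul]
  field_simp
  ring

/-- With unlimited generation and storage, the greedy policy achieves expected
average generation `(1 - α) E[Δ⁻]` for IID zero-mean prediction errors. -/
theorem stmt4 {Ω : Type*} [MeasureSpace Ω] [IsProbabilityMeasure (ℙ : Measure Ω)]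
    (Δ : ℕ → Ω → ℝ) (S G : ℕ → Ω → ℝ) (αc αd s₁ : ℝ)
    (hαc : αc ∈ Set.Ioo (0 : ℝ) 1) (hαd : αd ∈ Set.Ioo (0 : ℝ) 1)
    (hmeas : ∀ i, Measurable (Δ i))
    (hindep : iIndepFun Δ ℙ)
    (hident : ∀ i j, IdentDistrib (Δ i) (Δ j) ℙ ℙ)
    (hL2 : ∀ i, MemLp (Δ i) 2 ℙ)
    (hmean : ∀ i, ∫ ω, Δ i ω ∂ℙ = 0)
    (hS1 : ∀ ω, S 1 ω = s₁) (hs₁ : 0 ≤ s₁)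
    (hSdyn : ∀ i ≥ 1, ∀ ω,
      S (i + 1) ω = max (S i ω + αc * max (Δ i ω) 0 - max (-(Δ i ω)) 0 / αd) 0)
    (hG : ∀ i ≥ 1, ∀ ω,
      G i ω = max (-(Δ i ω)) 0 - (αc * αd) * max (Δ i ω) 0 + αd * (S (i + 1) ω - S i ω)) :
    Tendsto (fun n : ℕ => ∫ ω, (1 / (n : ℝ)) * ∑ i ∈ Finset.Icc 1 n, G i ω ∂ℙ)
      atTop (𝓝 ((1 - αc * αd) * ∫ ω, max (-(Δ 1 ω)) 0 ∂ℙ)) := by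
  have hα : αc * αd ≤ 1 := by nlinarith [hαc.2, hαd.1, hαd.2]
  set m := ∫ ω, max (-(Δ 1 ω)) 0 ∂ℙ
  have hint : ∀ i, Integrable (Δ i) ℙ := fun i => (hL2 i).integrable one_le_two
  have hneg : ∀ i, ∫ ω, max (-(Δ i ω)) 0 ∂ℙ = m := fun i =>
    ((hident i 1).comp (measurable_neg.max measurable_const)).integral_eq
  have hpos : ∀ i, ∫ ω, max (Δ i ω) 0 ∂ℙ = m := fun i =>
    (integral_max_zero_eq_integral_max_neg_zero (hint i) (hmean i)).trans (hneg i)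
  set X : ℕ → Ω → ℝ := fun n ω => storageIncrement αc αd (Δ (n + 1) ω)
  have hS : ∀ n, S (n + 1) = reflectedWalk X s₁ n :=
    eq_reflectedWalk hS1 fun i hi ω => by rw [hSdyn i hi ω, add_sub_assoc]
  have hX : ∀ n, MemLp (X n) 2 ℙ := fun n => memLp_storageIncrement (hL2 (n + 1))
  have hW : Tendsto (fun n : ℕ => (∫ ω, S (n + 1) ω ∂ℙ) / n) atTop (𝓝 0) := by
    simp only [hS]
    exact tendsto_integral_reflectedWalk_div hs₁
      (fun n => measurable_storageIncrement.comp (hmeas _))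
      ((hindep.comp _ fun _ => measurable_storageIncrement).precomp Nat.succ_injective) hX
      (fun n => integral_storageIncrement_nonpos hαd.1 hα (hint _) (hmean _))
      (fun n => ((hident (n + 1) 1).comp (measurable_storageIncrement.pow_const 2)).integral_eq.le)
  have havg : ∀ n : ℕ, 1 ≤ n → ∫ ω, (1 / (n : ℝ)) * ∑ i ∈ Finset.Icc 1 n, G i ω ∂ℙ
      = (1 - αc * αd) * m + αd * ((∫ ω, S (n + 1) ω ∂ℙ) / n) - αd * s₁ / n := fun n hn =>
    integral_average_eq_of_telescoping (a := fun i ω => max (-(Δ i ω)) 0 - αc * αd * max (Δ i ω) 0)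
      hn hG (fun i => (hint i).neg_part.sub ((hint i).pos_part.const_mul _))
      (fun i => by
        rw [integral_sub (hint i).neg_part ((hint i).pos_part.const_mul _), integral_const_mul,
          hneg, hpos]
        ring)
      hS1 (hS n ▸ (memLp_reflectedWalk hX n).integrable one_le_two)
  have hlim := (tendsto_const_nhds (x := (1 - αc * αd) * m)).add (hW.const_mul αd) |>.sub
    (tendsto_const_div_atTop_nhds_zero_nat (αd * s₁))
  rw [mul_zero, add_zero, sub_zero] at hlim
  exact hlim.congr' (eventually_atTop.2 ⟨1, fun n hn => (havg n hn).symm⟩)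
end

section
/- Under the same setup as the previous statement but with $\mathbb{E}[\Delta_i] = \mu \ge 0$, the minimum expected average generation satisfies $\lim_{n\to\infty}\mathbb{E}[\frac{1}{n}\sum_{i=1}^n G_i] = \big(\mathbb{E}[\Delta_1^- - \alpha\Delta_1^+]\big)^+$. -/
/-!
With `X i = αc Δᵢ⁺ - Δᵢ⁻ / αd`, the storage is the Lindley recursion `S (i+1) = (S i + X i)⁺`
and the generation telescopes: `∑ G i = -αd ∑ X i + αd (S (n+1) - S 1)`. So everything reduces
to `E[S (n+1)] / n → (E X)⁺`. From below, `S (n+1) ≥ max 0 (S 1 + ∑ X i)`. From above,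
`S (n+1) ≤ (S 1)⁺ + n (E X)⁺ + max_{k ≤ n} (W n - W k)`, `W` the centred random walk; cutting
`[0, n]` into blocks of length `b = ⌊√n⌋ + 1` and bounding the maximum by the `ℓ²` norms of the
walk on the grid `bℕ` and inside the blocks gives `E max ≤ 2 √((n+1) b Var X) = O(n^{3/4})`.
-/

open MeasureTheory ProbabilityTheory Filter Topology Finset

section Lindley

variable {s x : ℕ → ℝ}

theorem add_sum_range_le_lindley (hs : ∀ n, s (n + 1) = max (s n + x n) 0) (n : ℕ) :
    s 0 + ∑ i ∈ range n, x i ≤ s n := by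
  induction n with
  | zero => simp
  | succ n ih =>
    rw [hs, sum_range_succ, ← add_assoc]
    exact (add_le_add_left ih _).trans (le_max_left _ _)

theorem lindley_le_of_sum_Ico_le (hs : ∀ n, s (n + 1) = max (s n + x n) 0) (m : ℝ) {n : ℕ}
    {B : ℝ} (hB : ∀ k ≤ n, ∑ i ∈ Ico k n, (x i - m) ≤ B) :
    s n ≤ max (s 0) 0 + n * max m 0 + B := by
  induction n generalizing B with
  | zero =>
    have h0 : 0 ≤ B := by simpa using hB 0 le_rfl
    simp only [CharP.cast_eq_zero, zero_mul, add_zero]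
    linarith [le_max_left (s 0) 0]
  | succ n ih =>
    have hBn : ∀ k ≤ n, ∑ i ∈ Ico k n, (x i - m) ≤ B - (x n - m) := fun k hk => by
      have := hB k (by omega)
      rw [sum_Ico_succ_top hk] at this
      linarith
    have h0 : 0 ≤ B := by simpa using hB (n + 1) le_rfl
    have := ih hBn
    rw [hs]
    push_cast
    apply max_le <;> nlinarith [le_max_left m 0, le_max_right m 0, le_max_right (s 0) 0]

end Lindley

theorem sub_le_sqrt_add_sqrt_of_lt_mul_self (w : ℕ → ℝ) {n b k : ℕ} (hnb : n < b * b)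
    (hk : k ≤ n) :
    w n - w k ≤ √(∑ j ∈ range b, (w n - w (b * j)) ^ 2)
      + √(∑ i ∈ range (n + 1), (w i - w (b * (i / b))) ^ 2) := by
  have hb : 0 < b := Nat.pos_of_ne_zero (by rintro rfl; simp at hnb)
  have hkb : k / b ∈ range b := mem_range.2 ((Nat.div_lt_iff_lt_mul hb).2 (by omega))
  have hgrid := Real.abs_le_sqrt (single_le_sum (f := fun j => (w n - w (b * j)) ^ 2)
    (fun _ _ => sq_nonneg _) hkb)
  have hblock := Real.abs_le_sqrt (single_le_sum (f := fun i => (w i - w (b * (i / b))) ^ 2)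
    (fun _ _ => sq_nonneg _) (mem_range.2 (Nat.lt_succ_of_le hk)))
  linarith [le_abs_self (w n - w (b * (k / b))), neg_abs_le (w k - w (b * (k / b)))]

section Moments

variable {Ω : Type*} [MeasurableSpace Ω] {μ : Measure Ω} [IsProbabilityMeasure μ]

theorem MeasureTheory.Integrable.sqrt {q : Ω → ℝ} (hq : Integrable q μ) (hq0 : ∀ ω, 0 ≤ q ω) :
    Integrable (fun ω => √(q ω)) μ := by
  refine (hq.add (integrable_const 1)).mono'
    (Real.continuous_sqrt.comp_aestronglyMeasurable hq.aestronglyMeasurable) ?_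
  filter_upwards with ω
  rw [Real.norm_of_nonneg (Real.sqrt_nonneg _), Pi.add_apply]
  nlinarith [Real.sq_sqrt (hq0 ω), Real.sqrt_nonneg (q ω)]

theorem integral_sqrt_le_sqrt_integral {q : Ω → ℝ}
    (hq : Integrable q μ) (hq0 : ∀ ω, 0 ≤ q ω) :
    ∫ ω, √(q ω) ∂μ ≤ √(∫ ω, q ω ∂μ) :=
  Real.strictConcaveOn_sqrt.concaveOn.le_map_integral Real.continuous_sqrt.continuousOn
    isClosed_Ici (ae_of_all _ hq0) hq (hq.sqrt hq0)

variable {x : ℕ → Ω → ℝ} {m v : ℝ}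

theorem integral_sq_sum_Ico_sub_le (hx : ∀ i, MemLp (x i) 2 μ)
    (hindep : Pairwise fun i j => IndepFun (x i) (x j) μ) (hmean : ∀ i, ∫ ω, x i ω ∂μ = m)
    (hvar : ∀ i, variance (x i) μ ≤ v) (k l : ℕ) :
    ∫ ω, (∑ i ∈ Ico k l, (x i ω - m)) ^ 2 ∂μ ≤ (l - k : ℕ) * v := by
  have hsum : MemLp (∑ i ∈ Ico k l, x i) 2 μ := memLp_finsetSum' _ fun i _ => hx i
  have hcentered : ∀ ω, (∑ i ∈ Ico k l, x i) ω - ∫ ω', (∑ i ∈ Ico k l, x i) ω' ∂μ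
      = ∑ i ∈ Ico k l, (x i ω - m) := fun ω => by
    simp only [Finset.sum_apply]
    rw [integral_finsetSum _ fun i _ => (hx i).integrable one_le_two]
    simp [hmean, sum_sub_distrib]
  calc ∫ ω, (∑ i ∈ Ico k l, (x i ω - m)) ^ 2 ∂μ
      = variance (∑ i ∈ Ico k l, x i) μ := by
        simp only [variance_eq_integral hsum.aemeasurable, hcentered]
    _ = ∑ i ∈ Ico k l, variance (x i) μ :=
        IndepFun.variance_sum (fun i _ => hx i) fun i _ j _ hij => hindep hij
    _ ≤ ∑ _i ∈ Ico k l, v := sum_le_sum fun i _ => hvar i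
    _ = (l - k : ℕ) * v := by simp

theorem integral_sq_sub_sum_range_le (hx : ∀ i, MemLp (x i) 2 μ)
    (hindep : Pairwise fun i j => IndepFun (x i) (x j) μ) (hmean : ∀ i, ∫ ω, x i ω ∂μ = m)
    (hvar : ∀ i, variance (x i) μ ≤ v) {k l d : ℕ} (hkl : l ≤ k + d) (hlk : k ≤ l + d) :
    ∫ ω, (∑ i ∈ range l, (x i ω - m) - ∑ i ∈ range k, (x i ω - m)) ^ 2 ∂μ ≤ d * v := by
  have hv : 0 ≤ v := (variance_nonneg _ _).trans (hvar 0)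
  wlog h : k ≤ l generalizing k l
  · simpa only [← neg_sub (∑ i ∈ range k, _), neg_sq] using this hlk hkl (by omega)
  simp only [← sum_Ico_eq_sub _ h]
  refine (integral_sq_sum_Ico_sub_le hx hindep hmean hvar k l).trans ?_
  gcongr
  omega

theorem integrable_sq_sub_sum_range (hx : ∀ i, MemLp (x i) 2 μ) (k l : ℕ) :
    Integrable (fun ω => (∑ i ∈ range l, (x i ω - m) - ∑ i ∈ range k, (x i ω - m)) ^ 2) μ :=
  ((memLp_finsetSum _ fun i _ => (hx i).sub (memLp_const m)).sub
    (memLp_finsetSum _ fun i _ => (hx i).sub (memLp_const m))).integrable_sq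

theorem integral_sum_sq_sub_sum_range_le {ι : Type*} (t : Finset ι) (k l : ι → ℕ) {d : ℕ}
    (hx : ∀ i, MemLp (x i) 2 μ) (hindep : Pairwise fun i j => IndepFun (x i) (x j) μ)
    (hmean : ∀ i, ∫ ω, x i ω ∂μ = m) (hvar : ∀ i, variance (x i) μ ≤ v)
    (hkl : ∀ j ∈ t, l j ≤ k j + d) (hlk : ∀ j ∈ t, k j ≤ l j + d) :
    ∫ ω, ∑ j ∈ t, (∑ i ∈ range (l j), (x i ω - m) - ∑ i ∈ range (k j), (x i ω - m)) ^ 2 ∂μ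
      ≤ t.card * (d * v) := by
  rw [integral_finsetSum _ fun j _ => integrable_sq_sub_sum_range hx _ _, ← nsmul_eq_mul]
  exact sum_le_card_nsmul _ _ _ fun j hj =>
    integral_sq_sub_sum_range_le hx hindep hmean hvar (hkl j hj) (hlk j hj)

theorem integrable_sqrt_sum_sq_sub_sum_range {ι : Type*} (hx : ∀ i, MemLp (x i) 2 μ)
    (t : Finset ι) (k l : ι → ℕ) :
    Integrable (fun ω =>
      √(∑ j ∈ t, (∑ i ∈ range (l j), (x i ω - m) - ∑ i ∈ range (k j), (x i ω - m)) ^ 2)) μ :=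
  (integrable_finsetSum _ fun _ _ => integrable_sq_sub_sum_range hx _ _).sqrt
    fun _ => sum_nonneg fun _ _ => sq_nonneg _

theorem integral_sqrt_sum_sq_sub_sum_range_le {ι : Type*} (t : Finset ι) (k l : ι → ℕ)
    {d : ℕ} (hx : ∀ i, MemLp (x i) 2 μ) (hindep : Pairwise fun i j => IndepFun (x i) (x j) μ)
    (hmean : ∀ i, ∫ ω, x i ω ∂μ = m) (hvar : ∀ i, variance (x i) μ ≤ v)
    (hkl : ∀ j ∈ t, l j ≤ k j + d) (hlk : ∀ j ∈ t, k j ≤ l j + d) :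
    ∫ ω, √(∑ j ∈ t, (∑ i ∈ range (l j), (x i ω - m) - ∑ i ∈ range (k j), (x i ω - m)) ^ 2) ∂μ
      ≤ √(t.card * (d * v)) :=
  (integral_sqrt_le_sqrt_integral
    (integrable_finsetSum _ fun _ _ => integrable_sq_sub_sum_range hx _ _)
    fun _ => sum_nonneg fun _ _ => sq_nonneg _).trans
    (Real.sqrt_le_sqrt (integral_sum_sq_sub_sum_range_le t k l hx hindep hmean hvar hkl hlk))

end Moments

theorem tendsto_sqrt_succ_mul_sqrt_succ_div :
    Tendsto (fun n : ℕ => √((n + 1) * (Nat.sqrt n + 1)) / n) atTop (𝓝 0) := by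
  have hg : Tendsto (fun n : ℕ => (n + 1) * (Nat.sqrt n + 1) / (n : ℝ) ^ 2) atTop (𝓝 0) := by
    have hr : Tendsto (fun n : ℕ => √(n : ℝ)) atTop atTop :=
      Real.tendsto_sqrt_atTop.comp tendsto_natCast_atTop_atTop
    refine tendsto_of_tendsto_of_tendsto_of_le_of_le' tendsto_const_nhds
      (tendsto_const_nhds (x := (4 : ℝ)).div_atTop hr)
      (Eventually.of_forall fun n => by positivity) ?_
    filter_upwards [eventually_ge_atTop 1] with n hn
    have hs : (Nat.sqrt n : ℝ) ≤ √n := Real.nat_sqrt_le_real_sqrt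
    have hr1 : 1 ≤ √(n : ℝ) := Real.one_le_sqrt.2 (by exact_mod_cast hn)
    have hn : (n : ℝ) = √n ^ 2 := (Real.sq_sqrt (Nat.cast_nonneg n)).symm
    set r := √(n : ℝ)
    have hfactors : ((n : ℝ) + 1) * (Nat.sqrt n + 1) ≤ 2 * r ^ 2 * (2 * r) := by
      rw [hn]; gcongr <;> nlinarith
    rw [div_le_div_iff₀ (by positivity) (by positivity)]
    rw [hn] at hfactors ⊢
    nlinarith [mul_le_mul_of_nonneg_right hfactors (by positivity : 0 ≤ r)]
  refine ((Real.continuous_sqrt.tendsto 0).comp hg).congr' ?_ |>.trans (by rw [Real.sqrt_zero])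
  filter_upwards with n
  rw [Function.comp_apply, Real.sqrt_div' _ (by positivity), Real.sqrt_sq (Nat.cast_nonneg n)]

section LindleyExpectation

variable {Ω : Type*} [MeasurableSpace Ω] {μ : Measure Ω} {s x : ℕ → Ω → ℝ}

theorem integrable_lindley (hs : ∀ n ω, s (n + 1) ω = max (s n ω + x n ω) 0)
    (hs0 : Integrable (s 0) μ) (hx : ∀ i, Integrable (x i) μ) (n : ℕ) : Integrable (s n) μ := by
  induction n with
  | zero => exact hs0
  | succ n ih =>
    rw [show s (n + 1) = fun ω => max (s n ω + x n ω) 0 from funext (hs n)]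
    exact (ih.add (hx n)).pos_part

variable [IsProbabilityMeasure μ] {m v : ℝ}

theorem integral_lindley_le (hs : ∀ n ω, s (n + 1) ω = max (s n ω + x n ω) 0)
    (hs0 : Integrable (s 0) μ) (hx : ∀ i, MemLp (x i) 2 μ)
    (hindep : Pairwise fun i j => IndepFun (x i) (x j) μ) (hmean : ∀ i, ∫ ω, x i ω ∂μ = m)
    (hvar : ∀ i, variance (x i) μ ≤ v) (n : ℕ) :
    ∫ ω, s n ω ∂μ ≤ ∫ ω, max (s 0 ω) 0 ∂μ + n * max m 0
      + 2 * √((n + 1) * (Nat.sqrt n + 1) * v) := by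
  set b := Nat.sqrt n + 1 with hb
  set W : ℕ → Ω → ℝ := fun k ω => ∑ i ∈ range k, (x i ω - m)
  set A : Ω → ℝ := fun ω => ∑ j ∈ range b, (W n ω - W (b * j) ω) ^ 2
  set B : Ω → ℝ := fun ω => ∑ i ∈ range (n + 1), (W i ω - W (b * (i / b)) ω) ^ 2
  have hv : 0 ≤ v := (variance_nonneg _ _).trans (hvar 0)
  have hA : ∫ ω, √(A ω) ∂μ ≤ √((n + 1) * (Nat.sqrt n + 1) * v) := by
    refine (integral_sqrt_sum_sq_sub_sum_range_le (range b) (fun j => b * j) (fun _ => n)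
      (d := n) hx hindep hmean hvar (fun _ _ => by omega) fun j hj => ?_).trans
      (Real.sqrt_le_sqrt ?_)
    · have hbj : b * j ≤ Nat.sqrt n * Nat.sqrt n + Nat.sqrt n :=
        calc b * j ≤ b * Nat.sqrt n := Nat.mul_le_mul_left _ (by grind)
          _ = _ := by ring
      have := Nat.sqrt_le n
      have := Nat.sqrt_le_self n
      omega
    · rw [card_range, hb]
      push_cast
      nlinarith [mul_nonneg (Nat.cast_nonneg n) hv]
  have hB : ∫ ω, √(B ω) ∂μ ≤ √((n + 1) * (Nat.sqrt n + 1) * v) := by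
    refine (integral_sqrt_sum_sq_sub_sum_range_le (range (n + 1)) (fun i => b * (i / b)) id
      (d := b) hx hindep hmean hvar (fun i _ => ?_)
      fun i _ => Nat.le_add_right_of_le (Nat.mul_div_le i b)).trans (le_of_eq ?_)
    · have := Nat.div_add_mod i b
      have := Nat.mod_lt i (by omega : 0 < b)
      simp only [id]
      omega
    · rw [card_range, hb, mul_assoc]; push_cast; rfl
  have hpt : ∀ ω, s n ω ≤ max (s 0 ω) 0 + n * max m 0 + (√(A ω) + √(B ω)) := fun ω =>
    lindley_le_of_sum_Ico_le (s := fun k => s k ω) (fun k => hs k ω) m fun k hk => by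
      rw [sum_Ico_eq_sub _ hk]
      exact sub_le_sqrt_add_sqrt_of_lt_mul_self (fun k => W k ω) (Nat.lt_succ_sqrt n) hk
  have hs0' := hs0.pos_part
  have hsA : Integrable (fun ω => √(A ω)) μ := integrable_sqrt_sum_sq_sub_sum_range hx _ _ _
  have hsB : Integrable (fun ω => √(B ω)) μ := integrable_sqrt_sum_sq_sub_sum_range hx _ _ _
  calc ∫ ω, s n ω ∂μ
      ≤ ∫ ω, (max (s 0 ω) 0 + n * max m 0 + (√(A ω) + √(B ω))) ∂μ :=
        integral_mono (integrable_lindley hs hs0 (fun i => (hx i).integrable one_le_two) n)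
          ((hs0'.add (integrable_const _)).add (hsA.add hsB)) hpt
    _ = ∫ ω, max (s 0 ω) 0 ∂μ + n * max m 0 + (∫ ω, √(A ω) ∂μ + ∫ ω, √(B ω) ∂μ) := by
        rw [integral_add, integral_add, integral_add, integral_const, probReal_univ, one_smul]
        exacts [hsA, hsB, hs0', integrable_const _, hs0'.add (integrable_const _), hsA.add hsB]
    _ ≤ _ := by linarith

theorem tendsto_integral_lindley_div (hs : ∀ n ω, s (n + 1) ω = max (s n ω + x n ω) 0)
    (hs0 : Integrable (s 0) μ) (hx : ∀ i, MemLp (x i) 2 μ)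
    (hindep : Pairwise fun i j => IndepFun (x i) (x j) μ) (hmean : ∀ i, ∫ ω, x i ω ∂μ = m)
    (hvar : ∀ i, variance (x i) μ ≤ v) :
    Tendsto (fun n : ℕ => (∫ ω, s n ω ∂μ) / n) atTop (𝓝 (max m 0)) := by
  have hxi : ∀ i, Integrable (x i) μ := fun i => (hx i).integrable one_le_two
  have hlower : ∀ n, ∫ ω, s 0 ω ∂μ + n * m ≤ ∫ ω, s n ω ∂μ := fun n => by
    have := integral_mono (f := fun ω => s 0 ω + ∑ i ∈ range n, x i ω)
      (hs0.add (integrable_finsetSum _ fun i _ => hxi i)) (integrable_lindley hs hs0 hxi n)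
      fun ω => add_sum_range_le_lindley (s := fun k => s k ω) (fun k => hs k ω) n
    rwa [integral_add hs0 (integrable_finsetSum _ fun i _ => hxi i),
      integral_finsetSum _ fun i _ => hxi i, sum_congr rfl fun i _ => hmean i, sum_const,
      card_range, nsmul_eq_mul] at this
  have hnonneg : ∀ n, 0 ≤ ∫ ω, s (n + 1) ω ∂μ := fun n =>
    integral_nonneg fun ω => (hs n ω).symm ▸ le_max_right _ _
  refine tendsto_of_tendsto_of_tendsto_of_le_of_le'
    (g := fun n : ℕ => max (m + (∫ ω, s 0 ω ∂μ) / n) 0)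
    (h := fun n : ℕ => (∫ ω, max (s 0 ω) 0 ∂μ) / n + max m 0
      + 2 * √v * (√((n + 1) * (Nat.sqrt n + 1)) / n)) ?_ ?_ ?_ ?_
  · simpa using ((tendsto_const_nhds (x := m)).add
      (tendsto_const_div_atTop_nhds_zero_nat (∫ ω, s 0 ω ∂μ))).max (tendsto_const_nhds (x := 0))
  · simpa using ((tendsto_const_div_atTop_nhds_zero_nat _).add tendsto_const_nhds).add
      (tendsto_sqrt_succ_mul_sqrt_succ_div.const_mul (2 * √v))
  · filter_upwards [eventually_ge_atTop 1] with n hn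
    have hn' : (0 : ℝ) < n := by exact_mod_cast hn
    obtain ⟨k, rfl⟩ := Nat.exists_eq_add_of_le' hn
    refine max_le ?_ (div_nonneg (hnonneg k) hn'.le)
    rw [le_div_iff₀ hn', add_mul, div_mul_cancel₀ _ hn'.ne']
    linarith [hlower (k + 1)]
  · filter_upwards [eventually_ge_atTop 1] with n hn
    have hn' : (0 : ℝ) < n := by exact_mod_cast hn
    rw [div_le_iff₀ hn']
    have := integral_lindley_le hs hs0 hx hindep hmean hvar n
    rw [Real.sqrt_mul (by positivity)] at this
    field_simp
    linarith

theorem tendsto_integral_average_lindley_increment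
    (hs : ∀ n ω, s (n + 1) ω = max (s n ω + x n ω) 0)
    (hs0 : Integrable (s 0) μ) (hx : ∀ i, MemLp (x i) 2 μ)
    (hindep : Pairwise fun i j => IndepFun (x i) (x j) μ) (hmean : ∀ i, ∫ ω, x i ω ∂μ = m)
    (hvar : ∀ i, variance (x i) μ ≤ v) (c : ℝ) :
    Tendsto (fun n : ℕ => ∫ ω, (1 / (n : ℝ)) *
        ∑ i ∈ range n, (c * (s (i + 1) ω - s i ω) - c * x i ω) ∂μ)
      atTop (𝓝 (c * max m 0 - c * m)) := by
  have hxi : ∀ i, Integrable (x i) μ := fun i => (hx i).integrable one_le_two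
  have hexpected : ∀ n : ℕ, n ≠ 0 → ∫ ω, (1 / (n : ℝ)) *
      ∑ i ∈ range n, (c * (s (i + 1) ω - s i ω) - c * x i ω) ∂μ
      = c * ((∫ ω, s n ω ∂μ) / n) - c * (∫ ω, s 0 ω ∂μ) / n - c * m := fun n hn => by
    have hsn : Integrable (fun ω => c * (s n ω - s 0 ω)) μ :=
      ((integrable_lindley hs hs0 hxi n).sub hs0).const_mul c
    have hsum : Integrable (fun ω => c * ∑ i ∈ range n, x i ω) μ :=
      (integrable_finsetSum _ fun i _ => hxi i).const_mul c
    have htelescope : ∀ ω, ∑ i ∈ range n, (c * (s (i + 1) ω - s i ω) - c * x i ω)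
        = c * (s n ω - s 0 ω) - c * ∑ i ∈ range n, x i ω := fun ω => by
      rw [sum_sub_distrib, ← mul_sum, ← mul_sum, sum_range_sub (fun i => s i ω)]
    simp_rw [htelescope]
    rw [integral_const_mul, integral_sub hsn hsum, integral_const_mul, integral_const_mul,
      integral_sub (integrable_lindley hs hs0 hxi n) hs0, integral_finsetSum _ fun i _ => hxi i]
    simp only [hmean, sum_const, card_range, nsmul_eq_mul]
    field_simp
  refine ((((tendsto_integral_lindley_div hs hs0 hx hindep hmean hvar).const_mul c).sub
    (tendsto_const_div_atTop_nhds_zero_nat (c * ∫ ω, s 0 ω ∂μ))).sub_const (c * m)).congr' ?_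
    |>.trans (by rw [sub_zero])
  filter_upwards [eventually_ne_atTop 0] with n hn
  exact (hexpected n hn).symm

end LindleyExpectation

theorem MeasureTheory.MemLp.mul_pos_part_sub_neg_part_div {Ω : Type*} [MeasurableSpace Ω]
    {μ : Measure Ω} {p : ENNReal} {f : Ω → ℝ} (hf : MemLp f p μ) (a b : ℝ) :
    MemLp (fun ω => a * max (f ω) 0 - max (-f ω) 0 / b) p μ := by
  simp_rw [div_eq_inv_mul]
  exact (hf.pos_part.const_mul a).sub (hf.neg_part.const_mul b⁻¹)

theorem stmt5_general {Ω : Type*} [MeasureSpace Ω] [IsProbabilityMeasure (ℙ : Measure Ω)]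
    (Δ : ℕ → Ω → ℝ) (S G : ℕ → Ω → ℝ) (αc αd s₁ : ℝ)
    (hαd : αd ∈ Set.Ioo (0 : ℝ) 1)
    (hindep : iIndepFun Δ ℙ)
    (hident : ∀ i j, IdentDistrib (Δ i) (Δ j) ℙ ℙ)
    (hL2 : ∀ i, MemLp (Δ i) 2 ℙ)
    (hS1 : ∀ ω, S 1 ω = s₁)
    (hSdyn : ∀ i ≥ 1, ∀ ω,
      S (i + 1) ω = max (S i ω + αc * max (Δ i ω) 0 - max (-(Δ i ω)) 0 / αd) 0)
    (hG : ∀ i ≥ 1, ∀ ω,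
      G i ω = max (-(Δ i ω)) 0 - (αc * αd) * max (Δ i ω) 0 + αd * (S (i + 1) ω - S i ω)) :
    Tendsto (fun n : ℕ => ∫ ω, (1 / (n : ℝ)) * ∑ i ∈ Finset.Icc 1 n, G i ω ∂ℙ)
      atTop (𝓝 (max (∫ ω, (max (-(Δ 1 ω)) 0 - (αc * αd) * max (Δ 1 ω) 0) ∂ℙ) 0)) := by
  set φ : ℝ → ℝ := fun d => αc * max d 0 - max (-d) 0 / αd
  have hφ : Measurable φ := by fun_prop
  have hident' : ∀ i, IdentDistrib (φ ∘ Δ (i + 1)) (φ ∘ Δ 1) ℙ ℙ := fun i =>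
    (hident (i + 1) 1).comp hφ
  have hnet : ∀ d, max (-d) 0 - (αc * αd) * max d 0 = -αd * φ d := fun d => by
    simp only [φ]; field_simp [hαd.1.ne']; ring
  have hG' : ∀ n ω, ∑ i ∈ Icc 1 n, G i ω = ∑ i ∈ range n,
      (αd * (S (i + 1 + 1) ω - S (i + 1) ω) - αd * φ (Δ (i + 1) ω)) := fun n ω => by
    rw [← Ico_add_one_right_eq_Icc, ← sum_Ico_add' (fun i => G i ω) 0 n 1, ← range_eq_Ico]
    exact sum_congr rfl fun i _ => by rw [hG (i + 1) (by omega), hnet]; ring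
  have hlimit := tendsto_integral_average_lindley_increment (s := fun n => S (n + 1))
    (m := ∫ ω, φ (Δ 1 ω) ∂ℙ)
    (fun n ω => (hSdyn (n + 1) (by omega) ω).trans (by rw [add_sub_assoc]))
    ((integrable_const s₁).congr (ae_of_all _ fun ω => (hS1 ω).symm))
    (fun i => (hL2 (i + 1)).mul_pos_part_sub_neg_part_div αc αd)
    (fun i j hij => (hindep.indepFun (by simpa using hij)).comp hφ hφ)
    (fun i => (hident' i).integral_eq) (fun i => (hident' i).variance_eq.le) αd
  simp_rw [hG']
  convert hlimit using 2
  simp_rw [hnet, integral_const_mul]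
  rcases le_total (∫ ω, φ (Δ 1 ω) ∂ℙ) 0 with h | h
  · rw [max_eq_right h, max_eq_left (by nlinarith [hαd.1])]; ring
  · rw [max_eq_left h, max_eq_right (by nlinarith [hαd.1])]; ring

/-- With unlimited generation and storage, the greedy policy achieves expected
average generation `(E[Δ⁻ - αΔ⁺])⁺` for IID prediction errors with mean `μ ≥ 0`. -/
theorem stmt5 {Ω : Type*} [MeasureSpace Ω] [IsProbabilityMeasure (ℙ : Measure Ω)]
    (Δ : ℕ → Ω → ℝ) (S G : ℕ → Ω → ℝ) (αc αd s₁ : ℝ)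
    (hαc : αc ∈ Set.Ioo (0 : ℝ) 1) (hαd : αd ∈ Set.Ioo (0 : ℝ) 1)
    (hmeas : ∀ i, Measurable (Δ i))
    (hindep : iIndepFun Δ ℙ)
    (hident : ∀ i j, IdentDistrib (Δ i) (Δ j) ℙ ℙ)
    (hL2 : ∀ i, MemLp (Δ i) 2 ℙ)
    (μ : ℝ) (hμ : 0 ≤ μ)
    (hmean : ∀ i, ∫ ω, Δ i ω ∂ℙ = μ)
    (hS1 : ∀ ω, S 1 ω = s₁) (hs₁ : 0 ≤ s₁)
    (hSdyn : ∀ i ≥ 1, ∀ ω,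
      S (i + 1) ω = max (S i ω + αc * max (Δ i ω) 0 - max (-(Δ i ω)) 0 / αd) 0)
    (hG : ∀ i ≥ 1, ∀ ω,
      G i ω = max (-(Δ i ω)) 0 - (αc * αd) * max (Δ i ω) 0 + αd * (S (i + 1) ω - S i ω)) :
    Tendsto (fun n : ℕ => ∫ ω, (1 / (n : ℝ)) * ∑ i ∈ Finset.Icc 1 n, G i ω ∂ℙ)
      atTop (𝓝 (max (∫ ω, (max (-(Δ 1 ω)) 0 - (αc * αd) * max (Δ 1 ω) 0) ∂ℙ) 0)) :=
  stmt5_general Δ S G αc αd s₁ hαd hindep hident hL2 hS1 hSdyn hG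
end

section
/- Let $\Delta$ be Laplace($\lambda$) with density $\frac{\lambda}{2}e^{-\lambda|\delta|}$, and consider the Markov chain on $[0, S^{\max}]$ given by $S' = \min\{S + \alpha_c\Delta, S^{\max}\}$ if $\Delta \ge 0$ and $S' = \max\{S + \Delta/\alpha_d, 0\}$ if $\Delta < 0$. Then the distribution with CDF $F_S(s) = \frac{1 - \frac{1+\alpha}{2}e^{-(1/\alpha_c - \alpha_d)\lambda s/2}}{1 - \alpha e^{-(1/\alpha_c - \alpha_d)\lambda S^{\max}/2}}$ for $0 \le s < S^{\max}$ (with $F_S(s)=0$ for $s<0$ and $F_S(s)=1$ for $s \ge S^{\max}$), where $\alpha = \alpha_c\alpha_d$, is stationary: if $S$ has CDF $F_S$ and $\Delta$ is independent of $S$, then $S'$ also has CDF $F_S$. -/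
/-!
On `[0, Smax)` we have `2 D · statCDF t = Φ t + Ψ t`, where `Φ t = 1 - αc αd e^{-βt}`,
`Ψ t = 1 - e^{-βt}`, `β = (1/αc - αd) λ / 2` and `D = Φ Smax`. The rate `β` is exactly the one
for which `δ ↦ e^{λδ} Φ(s - δ/αd) / (2D)` is an antiderivative of the discharge integrand and
`δ ↦ -e^{-λδ} Ψ(s - αc δ) / (2D)` one of the charge integrand. Since `Φ Smax = D`, the discharge
integral is `Φ s / (2D) - e^{-λ αd (Smax - s)} / 2`, which cancels the Laplace tail; since
`Ψ 0 = 0`, the charge integral is `Ψ s / (2D)`. The three terms add up to `statCDF s`.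
-/

open MeasureTheory Real

noncomputable def statCDF (l αc αd Smax : ℝ) (s : ℝ) : ℝ :=
  if s < 0 then 0
  else if s < Smax then
    (1 - (1 + αc * αd) / 2 * exp (-((1 / αc - αd) * l * s / 2))) /
      (1 - αc * αd * exp (-((1 / αc - αd) * l * Smax / 2)))
  else 1

open Set

noncomputable def statNormalizer (l αc αd Smax : ℝ) : ℝ :=
  1 - αc * αd * exp (-((1 / αc - αd) * l * Smax / 2))

lemma statCDF_of_mem_Ico {l αc αd Smax t : ℝ} (ht : t ∈ Ico 0 Smax) :
    statCDF l αc αd Smax t =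
      (1 - (1 + αc * αd) / 2 * exp (-((1 / αc - αd) * l * t / 2))) /
        statNormalizer l αc αd Smax := by
  simp only [statCDF, statNormalizer, if_neg (not_lt.2 ht.1), if_pos ht.2]

lemma statNormalizer_pos {l αc αd Smax : ℝ} (hl : 0 < l) (hαc : αc ∈ Ioo (0 : ℝ) 1)
    (hαd : αd ∈ Ioo (0 : ℝ) 1) (hS : 0 ≤ Smax) : 0 < statNormalizer l αc αd Smax := by
  obtain ⟨hαc0, hαc1⟩ := hαc
  obtain ⟨hαd0, hαd1⟩ := hαd
  have hrate : 0 < 1 / αc - αd := by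
    have : 1 < 1 / αc := by rw [lt_div_iff₀ hαc0]; linarith
    linarith
  have hexp : exp (-((1 / αc - αd) * l * Smax / 2)) ≤ 1 :=
    exp_le_one_iff.2 (by have := mul_nonneg (mul_pos hrate hl).le hS; linarith)
  have hprod : αc * αd < 1 := by nlinarith
  unfold statNormalizer
  nlinarith [mul_le_mul_of_nonneg_left hexp (mul_pos hαc0 hαd0).le]

lemma integral_laplace_density_Iic {l : ℝ} (hl : 0 < l) (b : ℝ) :
    ∫ δ in Iic b, l / 2 * exp (l * δ) = exp (l * b) / 2 := by
  rw [integral_const_mul, integral_exp_mul_Iic hl]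
  field_simp

lemma integral_exp_mul_sub_mul_exp (a b c x u v : ℝ) :
    ∫ δ in u..v, exp (a * δ) * (a - x * (a + b) * exp (b * δ + c)) =
      exp (a * v) * (1 - x * exp (b * v + c)) - exp (a * u) * (1 - x * exp (b * u + c)) := by
  refine intervalIntegral.integral_eq_sub_of_hasDerivAt
    (f := fun δ => exp (a * δ) * (1 - x * exp (b * δ + c))) (fun δ _ => ?_)
    (Continuous.intervalIntegrable
      (by fun_prop : Continuous fun δ => exp (a * δ) * (a - x * (a + b) * exp (b * δ + c))) _ _)
  have hinner : HasDerivAt (fun δ => b * δ + c) b δ := by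
    simpa using ((hasDerivAt_id δ).const_mul b).add_const c
  have hlin : HasDerivAt (fun δ => a * δ) a δ := by simpa using (hasDerivAt_id δ).const_mul a
  refine (hlin.exp.fun_mul ((hinner.exp.const_mul x).const_sub 1)).congr_deriv ?_
  ring

lemma integral_discharge_statCDF {l αc αd Smax s : ℝ} (hαc : αc ≠ 0) (hαd : 0 < αd)
    (hs : s ∈ Ico 0 Smax) :
    ∫ δ in (-(αd * (Smax - s)))..0, l / 2 * exp (l * δ) * statCDF l αc αd Smax (s - δ / αd) =
      (1 - αc * αd * exp (-((1 / αc - αd) * l * s / 2)) -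
          exp (l * -(αd * (Smax - s))) * statNormalizer l αc αd Smax) /
        (2 * statNormalizer l αc αd Smax) := by
  have hu : -(αd * (Smax - s)) ≤ 0 := by nlinarith [hs.2]
  have hcoef : αc * αd * (l + (1 / αc - αd) * l / 2 / αd) = l * (1 + αc * αd) / 2 := by
    field_simp; ring
  have hexp (δ : ℝ) : -((1 / αc - αd) * l * (s - δ / αd) / 2) =
      (1 / αc - αd) * l / 2 / αd * δ + -((1 / αc - αd) * l * s / 2) := by
    field_simp; ring
  calc _ = ∫ δ in (-(αd * (Smax - s)))..0, exp (l * δ) * (l - αc * αd *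
          (l + (1 / αc - αd) * l / 2 / αd) * exp ((1 / αc - αd) * l / 2 / αd * δ +
            -((1 / αc - αd) * l * s / 2))) / (2 * statNormalizer l αc αd Smax) := by
        refine intervalIntegral.integral_congr_ae (Filter.Eventually.of_forall fun δ hδ => ?_)
        rw [uIoc_of_le hu] at hδ
        have ht : s - δ / αd ∈ Ico 0 Smax := by
          constructor
          · have : δ / αd ≤ 0 := div_nonpos_of_nonpos_of_nonneg hδ.2 hαd.le
            linarith [hs.1]
          · have : -(Smax - s) < δ / αd := by rw [lt_div_iff₀ hαd]; linarith [hδ.1]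
            linarith
        rw [statCDF_of_mem_Ico ht, hcoef, hexp]
        ring
    _ = _ := by
        rw [intervalIntegral.integral_div, integral_exp_mul_sub_mul_exp]
        congr 3
        · simp
        · unfold statNormalizer
          congr 4
          field_simp
          ring

lemma integral_charge_statCDF {l αc αd Smax s : ℝ} (hαc : 0 < αc) (hs : s ∈ Ico 0 Smax) :
    ∫ δ in (0 : ℝ)..(s / αc), l / 2 * exp (-(l * δ)) * statCDF l αc αd Smax (s - αc * δ) =
      (1 - exp (-((1 / αc - αd) * l * s / 2))) / (2 * statNormalizer l αc αd Smax) := by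
  have hv : 0 ≤ s / αc := div_nonneg hs.1 hαc.le
  have hcoef : 1 * (-l + (1 / αc - αd) * l / 2 * αc) = -(l * (1 + αc * αd) / 2) := by
    field_simp; ring
  have hexp (δ : ℝ) : -((1 / αc - αd) * l * (s - αc * δ) / 2) =
      (1 / αc - αd) * l / 2 * αc * δ + -((1 / αc - αd) * l * s / 2) := by
    ring
  calc _ = ∫ δ in (0 : ℝ)..(s / αc), -(exp (-l * δ) * (-l - 1 *
          (-l + (1 / αc - αd) * l / 2 * αc) * exp ((1 / αc - αd) * l / 2 * αc * δ +
            -((1 / αc - αd) * l * s / 2)))) / (2 * statNormalizer l αc αd Smax) := by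
        refine intervalIntegral.integral_congr_ae (Filter.Eventually.of_forall fun δ hδ => ?_)
        rw [uIoc_of_le hv] at hδ
        have ht : s - αc * δ ∈ Ico 0 Smax := by
          have : αc * δ ≤ s := (le_div_iff₀' hαc).1 hδ.2
          constructor <;> nlinarith [hδ.1, hs.2]
        rw [statCDF_of_mem_Ico ht, hcoef, hexp, neg_mul l δ]
        ring
    _ = _ := by
        have hend : (1 / αc - αd) * l / 2 * αc * (s / αc) + -((1 / αc - αd) * l * s / 2) = 0 := by
          field_simp; ring
        rw [intervalIntegral.integral_div, intervalIntegral.integral_neg,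
          integral_exp_mul_sub_mul_exp, hend]
        simp
theorem stmt7_general (l αc αd Smax : ℝ) (hl : 0 < l)
    (hαc : αc ∈ Set.Ioo (0 : ℝ) 1) (hαd : αd ∈ Set.Ioo (0 : ℝ) 1) :
    ∀ s, 0 ≤ s → s < Smax →
      (∫ δ in Set.Iic (-(αd * (Smax - s))), (l / 2) * exp (l * δ)) +
      (∫ δ in (-(αd * (Smax - s)))..0,
        (l / 2) * exp (l * δ) * statCDF l αc αd Smax (s - δ / αd)) +
      (∫ δ in (0 : ℝ)..(s / αc),
        (l / 2) * exp (-(l * δ)) * statCDF l αc αd Smax (s - αc * δ)) =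
      statCDF l αc αd Smax s := by
  intro s hs0 hsS
  have hs : s ∈ Ico 0 Smax := ⟨hs0, hsS⟩
  have hD := (statNormalizer_pos hl hαc hαd (hs0.trans hsS.le)).ne'
  rw [integral_laplace_density_Iic hl, integral_discharge_statCDF hαc.1.ne' hαd.1 hs,
    integral_charge_statCDF hαc.1 hs, statCDF_of_mem_Ico hs]
  field_simp
  ring

/-- The distribution with CDF `statCDF` is stationary for the storage Markov chain
driven by IID Laplace(λ) errors under the greedy policy: for `0 ≤ s < Sᵐᵃˣ`, the
one-step integral equation holds. -/
theorem stmt7 (l αc αd Smax : ℝ) (hl : 0 < l)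
    (hαc : αc ∈ Set.Ioo (0 : ℝ) 1) (hαd : αd ∈ Set.Ioo (0 : ℝ) 1) (hS : 0 < Smax) :
    ∀ s, 0 ≤ s → s < Smax →
      (∫ δ in Set.Iic (-(αd * (Smax - s))), (l / 2) * exp (l * δ)) +
      (∫ δ in (-(αd * (Smax - s)))..0,
        (l / 2) * exp (l * δ) * statCDF l αc αd Smax (s - δ / αd)) +
      (∫ δ in (0 : ℝ)..(s / αc),
        (l / 2) * exp (-(l * δ)) * statCDF l αc αd Smax (s - αc * δ)) =
      statCDF l αc αd Smax s :=
  stmt7_general l αc αd Smax hl hαc hαd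
end

section
/- With $S$ distributed according to the stationary CDF $F_S$ of the previous statement and $\Delta \sim$ Laplace($\lambda$) independent of $S$, the generation $G = \min\{(-\Delta - \alpha_d S)^+, G^{\max}\}$ has CDF $F_G(g) = 1 - \frac{1-\alpha}{2(1-\alpha e^{-(1/\alpha_c-\alpha_d)\lambda S^{\max}/2})} e^{-\lambda g}$ for $0 \le g < G^{\max}$, $F_G(g) = 0$ for $g < 0$, and $F_G(g) = 1$ for $g \ge G^{\max}$. -/
/-! For `0 ≤ g < Gmax` the event `G > g` is `Δ < -g - αd S`. Conditioning on `S` (independent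
of `Δ`) and using the Laplace tail `P(Δ < t) = e^{λt}/2` for `t ≤ 0`, its probability is
`e^{-λg}/2 · E[e^{-λ αd S}]`. The law of `S` has atoms at `0` and `Smax` and an exponential
density of rate `c = (1/αc - αd)λ/2` in between; its Laplace transform at `λ αd` collapses to
`(1 - α)/(1 - α e^{-c Smax})` because `c / (c + λ αd) = (1 - α)/(1 + α)`. -/

open MeasureTheory ProbabilityTheory Real

/-- CDF of a Laplace(λ) random variable. -/
noncomputable def laplaceCDF (l x : ℝ) : ℝ :=
  if x < 0 then exp (l * x) / 2 else 1 - exp (-(l * x)) / 2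

open Set
open scoped ENNReal

lemma laplaceCDF_of_nonpos (l : ℝ) {x : ℝ} (hx : x ≤ 0) : laplaceCDF l x = exp (l * x) / 2 := by
  rcases hx.lt_or_eq with hx | rfl
  · simp [laplaceCDF, hx]
  · norm_num [laplaceCDF]

lemma continuous_laplaceCDF (l : ℝ) : Continuous (laplaceCDF l) := by
  have h : laplaceCDF l = fun x ↦ if x ≤ 0 then exp (l * x) / 2 else 1 - exp (-(l * x)) / 2 := by
    ext x
    split_ifs with hx
    · exact laplaceCDF_of_nonpos l hx
    · simp [laplaceCDF, (not_le.mp hx).not_gt]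
  rw [h]
  exact Continuous.if_le (by fun_prop) (by fun_prop) continuous_id continuous_const
    fun x hx ↦ by norm_num [show x = 0 from hx]

lemma cdf_map_eq {Ω : Type*} [MeasurableSpace Ω] {P : Measure Ω} [IsProbabilityMeasure P]
    {X : Ω → ℝ} (hX : Measurable X) {F : ℝ → ℝ} (hF : ∀ x, (P {ω | X ω ≤ x}).toReal = F x) :
    cdf (P.map X) = F := by
  have := Measure.isProbabilityMeasure_map (μ := P) hX.aemeasurable
  ext x
  rw [cdf_eq_real, measureReal_def, Measure.map_apply hX measurableSet_Iic]
  exact hF x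

lemma measure_singleton_eq_zero_of_continuousAt_cdf {μ : Measure ℝ} [IsProbabilityMeasure μ]
    {x : ℝ} (h : ContinuousAt (cdf μ) x) : μ {x} = 0 := by
  rw [← measure_cdf μ, StieltjesFunction.measure_singleton, h.continuousWithinAt.leftLim_eq,
    sub_self, ENNReal.ofReal_zero]

lemma measure_lt_comp_eq_lintegral_of_indepFun {Ω α : Type*} [MeasurableSpace Ω]
    [MeasurableSpace α] {P : Measure Ω} [IsFiniteMeasure P] {X : Ω → α} {Y : Ω → ℝ}
    (hX : Measurable X) (hY : Measurable Y) (hXY : IndepFun X Y P) {f : α → ℝ}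
    (hf : Measurable f) :
    P {ω | Y ω < f (X ω)} = ∫⁻ x, P.map Y (Iio (f x)) ∂P.map X := by
  have hA : MeasurableSet {p : α × ℝ | p.2 < f p.1} :=
    measurableSet_lt measurable_snd (hf.comp measurable_fst)
  calc P {ω | Y ω < f (X ω)} = P.map (fun ω ↦ (X ω, Y ω)) {p | p.2 < f p.1} := by
        rw [Measure.map_apply (hX.prodMk hY) hA]; rfl
    _ = ((P.map X).prod (P.map Y)) {p | p.2 < f p.1} := by
        rw [(indepFun_iff_map_prod_eq_prod_map_map hX.aemeasurable hY.aemeasurable).mp hXY]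
    _ = ∫⁻ x, P.map Y (Iio (f x)) ∂P.map X := Measure.prod_apply hA

lemma setLIntegral_exp_neg_mul_Ioc {A k a b : ℝ} (hA : 0 ≤ A) (hk : k ≠ 0) (hab : a ≤ b) :
    ∫⁻ s in Ioc a b, ENNReal.ofReal (A * exp (-(k * s))) =
      ENNReal.ofReal (A * (exp (-(k * a)) - exp (-(k * b))) / k) := by
  rw [← ofReal_integral_eq_lintegral_ofReal (by fun_prop : Continuous _).integrableOn_Ioc
      (.of_forall fun s ↦ by positivity), ← intervalIntegral.integral_of_le hab,
    intervalIntegral.integral_const_mul]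
  simp_rw [← neg_mul]
  rw [intervalIntegral.integral_comp_mul_left (fun x ↦ exp x) (neg_ne_zero.mpr hk), integral_exp]
  congr 1
  rw [smul_eq_mul]
  field_simp
  ring

noncomputable def expMixture (p₀ p₁ A k b : ℝ) : Measure ℝ :=
  ENNReal.ofReal p₀ • Measure.dirac 0 +
    (volume.restrict (Ioo 0 b)).withDensity (fun s ↦ ENNReal.ofReal (A * exp (-(k * s)))) +
    ENNReal.ofReal p₁ • Measure.dirac b

lemma mul_one_sub_exp_neg_mul_div_nonneg {A k x : ℝ} (hA : 0 ≤ A) (hk : 0 < k) (hx : 0 ≤ x) :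
    0 ≤ A * (1 - exp (-(k * x))) / k :=
  div_nonneg (mul_nonneg hA (sub_nonneg.mpr (exp_le_one_iff.mpr (by nlinarith)))) hk.le

section ExpMixture

variable {p₀ p₁ A k b : ℝ}

lemma expMixture_apply {B : Set ℝ} (hB : MeasurableSet B) :
    expMixture p₀ p₁ A k b B =
      ENNReal.ofReal p₀ * B.indicator 1 0 +
        (∫⁻ s in B ∩ Ioo 0 b, ENNReal.ofReal (A * exp (-(k * s)))) +
        ENNReal.ofReal p₁ * B.indicator 1 b := by
  rw [expMixture, Measure.add_apply, Measure.add_apply, Measure.smul_apply, Measure.smul_apply,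
    Measure.dirac_apply' _ hB, Measure.dirac_apply' _ hB, withDensity_apply _ hB,
    Measure.restrict_restrict hB, smul_eq_mul, smul_eq_mul]

lemma lintegral_expMixture {h : ℝ → ℝ≥0∞} (hh : Measurable h) :
    ∫⁻ s, h s ∂expMixture p₀ p₁ A k b =
      ENNReal.ofReal p₀ * h 0 +
        (∫⁻ s in Ioo 0 b, ENNReal.ofReal (A * exp (-(k * s))) * h s) +
        ENNReal.ofReal p₁ * h b := by
  rw [expMixture, lintegral_add_measure, lintegral_add_measure, lintegral_smul_measure,
    lintegral_smul_measure, lintegral_dirac' _ hh, lintegral_dirac' _ hh,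
    lintegral_withDensity_eq_lintegral_mul _ (by fun_prop) hh, smul_eq_mul, smul_eq_mul]
  rfl

lemma ae_nonneg_expMixture (hb : 0 ≤ b) : ∀ᵐ s ∂expMixture p₀ p₁ A k b, 0 ≤ s := by
  rw [ae_iff]
  simp only [not_le]
  change expMixture p₀ p₁ A k b (Iio 0) = 0
  rw [expMixture_apply measurableSet_Iio, Iio_inter_Ioo]
  simp [hb.not_gt]

lemma expMixture_Iic (hp₀ : 0 ≤ p₀) (hp₁ : 0 ≤ p₁) (hA : 0 ≤ A) (hk : 0 < k) (hb : 0 < b)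
    (a : ℝ) :
    expMixture p₀ p₁ A k b (Iic a) =
      if a < 0 then 0
      else if a < b then ENNReal.ofReal (p₀ + A * (1 - exp (-(k * a))) / k)
      else ENNReal.ofReal (p₀ + A * (1 - exp (-(k * b))) / k + p₁) := by
  have hmass := fun x ↦ mul_one_sub_exp_neg_mul_div_nonneg (x := x) hA hk
  rw [expMixture_apply measurableSet_Iic]
  split_ifs with ha₀ hab
  · have hempty : Iic a ∩ Ioo 0 b = ∅ := by
      ext x; simp only [mem_inter_iff, mem_Iic, mem_Ioo, mem_empty_iff_false, iff_false]; grind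
    simp [hempty, not_le.mpr ha₀, not_le.mpr (ha₀.trans hb)]
  · push Not at ha₀
    have hIoc : Iic a ∩ Ioo 0 b = Ioc 0 a := by
      ext x; simp only [mem_inter_iff, mem_Iic, mem_Ioo, mem_Ioc]; grind
    rw [hIoc, setLIntegral_exp_neg_mul_Ioc hA hk.ne' ha₀, indicator_of_mem (mem_Iic.mpr ha₀),
      indicator_of_notMem (notMem_Iic.mpr hab)]
    simp only [Pi.one_apply, mul_one, mul_zero, add_zero, neg_zero, exp_zero]
    rw [← ENNReal.ofReal_add hp₀ (hmass a ha₀)]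
  · push Not at ha₀ hab
    have hIoo : Iic a ∩ Ioo 0 b = Ioo 0 b :=
      inter_eq_self_of_subset_right fun x hx ↦ hx.2.le.trans hab
    rw [hIoo, Measure.restrict_congr_set Ioo_ae_eq_Ioc,
      setLIntegral_exp_neg_mul_Ioc hA hk.ne' hb.le,
      indicator_of_mem (mem_Iic.mpr (hb.le.trans hab)), indicator_of_mem (mem_Iic.mpr hab)]
    simp only [Pi.one_apply, mul_one, mul_zero, neg_zero, exp_zero]
    rw [← ENNReal.ofReal_add hp₀ (hmass b hb.le),
      ← ENNReal.ofReal_add (by linarith [hmass b hb.le]) hp₁]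

lemma lintegral_exp_neg_mul_expMixture {κ : ℝ} (hp₀ : 0 ≤ p₀) (hp₁ : 0 ≤ p₁) (hA : 0 ≤ A)
    (hkκ : 0 < k + κ) (hb : 0 ≤ b) :
    ∫⁻ s, ENNReal.ofReal (exp (-(κ * s))) ∂expMixture p₀ p₁ A k b =
      ENNReal.ofReal (p₀ + A * (1 - exp (-((k + κ) * b))) / (k + κ) + p₁ * exp (-(κ * b))) := by
  have hdensity : ∀ s, ENNReal.ofReal (A * exp (-(k * s))) * ENNReal.ofReal (exp (-(κ * s))) =
      ENNReal.ofReal (A * exp (-((k + κ) * s))) := fun s ↦ by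
    rw [← ENNReal.ofReal_mul (by positivity), mul_assoc, ← exp_add]
    ring_nf
  rw [lintegral_expMixture (by fun_prop)]
  simp_rw [hdensity]
  rw [Measure.restrict_congr_set Ioo_ae_eq_Ioc, setLIntegral_exp_neg_mul_Ioc hA hkκ.ne' hb]
  simp only [mul_zero, neg_zero, exp_zero, ENNReal.ofReal_one, mul_one]
  rw [← ENNReal.ofReal_mul hp₁, ← ENNReal.ofReal_add hp₀ ?_,
    ← ENNReal.ofReal_add ?_ (by positivity)]
  all_goals linarith [mul_one_sub_exp_neg_mul_div_nonneg hA hkκ hb]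

end ExpMixture

/-- The constants are read off `statCDF`: its jumps at `0` and `Smax` and its density on
`(0, Smax)`, with `c = (1 / αc - αd) λ / 2` and `D` the denominator of `statCDF`. -/
noncomputable def storageLaw (l αc αd Smax : ℝ) : Measure ℝ :=
  let α := αc * αd
  let c := (1 / αc - αd) * l / 2
  let D := 1 - α * exp (-(c * Smax))
  expMixture ((1 - α) / (2 * D)) ((1 - α) * exp (-(c * Smax)) / (2 * D))
    ((1 + α) * c / (2 * D)) c Smax

section StorageLaw

variable {l αc αd Smax : ℝ}

lemma storageLaw_constants (hl : 0 < l) (hαc : αc ∈ Ioo 0 1) (hαd : αd ∈ Ioo 0 1)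
    (hSmax : 0 < Smax) :
    0 < (1 / αc - αd) * l / 2 ∧ 0 < αc * αd ∧ αc * αd < 1 ∧
      0 < 1 - αc * αd * exp (-((1 / αc - αd) * l * Smax / 2)) := by
  obtain ⟨hαc₀, hαc₁⟩ := hαc
  obtain ⟨hαd₀, hαd₁⟩ := hαd
  have hc : 0 < (1 / αc - αd) * l / 2 := by
    have : 1 < 1 / αc := by rw [lt_div_iff₀ hαc₀]; linarith
    have : 0 < 1 / αc - αd := by linarith
    positivity
  have hα₁ : αc * αd < 1 := by nlinarith
  have hE : exp (-((1 / αc - αd) * l * Smax / 2)) ≤ 1 := exp_le_one_iff.mpr (by nlinarith)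
  refine ⟨hc, by positivity, hα₁, ?_⟩
  nlinarith [mul_le_mul_of_nonneg_left hE (by positivity : 0 ≤ αc * αd)]

lemma storageLaw_Iic (hl : 0 < l) (hαc : αc ∈ Ioo 0 1) (hαd : αd ∈ Ioo 0 1)
    (hSmax : 0 < Smax) (a : ℝ) :
    storageLaw l αc αd Smax (Iic a) = ENNReal.ofReal (statCDF l αc αd Smax a) := by
  obtain ⟨hc, hα₀, hα₁, hD⟩ := storageLaw_constants hl hαc hαd hSmax
  have hrate : ∀ s, (1 / αc - αd) * l * s / 2 = (1 / αc - αd) * l / 2 * s := fun s ↦ by ring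
  rw [hrate] at hD
  simp only [storageLaw]
  rw [expMixture_Iic (div_nonneg (by linarith) (by positivity))
    (div_nonneg (by nlinarith [exp_pos (-((1 / αc - αd) * l / 2 * Smax))]) (by positivity))
    (div_nonneg (by positivity) (by positivity)) hc hSmax]
  simp only [statCDF, hrate]
  set c := (1 / αc - αd) * l / 2
  set D := 1 - αc * αd * exp (-(c * Smax))
  split_ifs
  · simp
  · congr 1
    field_simp
    ring
  · congr 1
    field_simp
    ring

lemma lintegral_exp_storageLaw (hl : 0 < l) (hαc : αc ∈ Ioo 0 1) (hαd : αd ∈ Ioo 0 1)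
    (hSmax : 0 < Smax) :
    ∫⁻ s, ENNReal.ofReal (exp (-(l * αd * s))) ∂storageLaw l αc αd Smax =
      ENNReal.ofReal
        ((1 - αc * αd) / (1 - αc * αd * exp (-((1 / αc - αd) * l * Smax / 2)))) := by
  obtain ⟨hc, hα₀, hα₁, hD⟩ := storageLaw_constants hl hαc hαd hSmax
  have hαc₀ : αc ≠ 0 := hαc.1.ne'
  have hrate : 0 < (1 / αc - αd) * l / 2 + l * αd := by nlinarith [hαd.1]
  rw [show (1 / αc - αd) * l * Smax / 2 = (1 / αc - αd) * l / 2 * Smax by ring] at hD ⊢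
  simp only [storageLaw]
  rw [lintegral_exp_neg_mul_expMixture (div_nonneg (by linarith) (by positivity))
    (div_nonneg (by nlinarith [exp_pos (-((1 / αc - αd) * l / 2 * Smax))]) (by positivity))
    (div_nonneg (by positivity) (by positivity)) hrate hSmax.le]
  rw [show -(((1 / αc - αd) * l / 2 + l * αd) * Smax) =
      -((1 / αc - αd) * l / 2 * Smax) + -(l * αd * Smax) by ring, exp_add]
  set E := exp (-((1 / αc - αd) * l / 2 * Smax))
  set F := exp (-(l * αd * Smax))
  have h1α : 1 + αc * αd ≠ 0 := by positivity
  have hl₀ : l ≠ 0 := hl.ne'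
  congr 1
  field_simp
  rw [show 1 - αc * αd + αc * αd * 2 = 1 + αc * αd by ring, mul_div_cancel_left₀ _ h1α]
  ring

lemma lintegral_laplaceCDF_storageLaw (hl : 0 < l) (hαc : αc ∈ Ioo 0 1) (hαd : αd ∈ Ioo 0 1)
    (hSmax : 0 < Smax) {g : ℝ} (hg : 0 ≤ g) :
    ∫⁻ s, ENNReal.ofReal (laplaceCDF l (-g - αd * s)) ∂storageLaw l αc αd Smax =
      ENNReal.ofReal ((1 - αc * αd) /
        (2 * (1 - αc * αd * exp (-((1 / αc - αd) * l * Smax / 2)))) * exp (-(l * g))) := by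
  have hfactor : ∀ s, 0 ≤ s → ENNReal.ofReal (laplaceCDF l (-g - αd * s)) =
      ENNReal.ofReal (exp (-(l * g)) / 2) * ENNReal.ofReal (exp (-(l * αd * s))) := fun s hs ↦ by
    rw [laplaceCDF_of_nonpos l (by nlinarith [hαd.1]), ← ENNReal.ofReal_mul (by positivity),
      div_mul_eq_mul_div, ← exp_add]
    ring_nf
  have hnonneg : ∀ᵐ s ∂storageLaw l αc αd Smax, 0 ≤ s := ae_nonneg_expMixture hSmax.le
  rw [lintegral_congr_ae (hnonneg.mono hfactor),
    lintegral_const_mul _ (by fun_prop), lintegral_exp_storageLaw hl hαc hαd hSmax,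
    ← ENNReal.ofReal_mul (by positivity), div_mul_div_comm, div_mul_eq_mul_div, mul_comm (exp _)]

end StorageLaw

lemma min_max_le_iff_le {x g M : ℝ} (hg : 0 ≤ g) (hgM : g < M) :
    min (max x 0) M ≤ g ↔ x ≤ g := by
  simp [hg, hgM.not_ge]

/-- Stationary distribution of the fast-ramping generation
`G = min{(-Δ - αd S)⁺, Gᵐᵃˣ}` when `S` is stationary and `Δ ~ Laplace(λ)` is
independent of `S`. -/
theorem stmt8 {Ω : Type*} [MeasureSpace Ω] [IsProbabilityMeasure (ℙ : Measure Ω)]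
    (S Δ : Ω → ℝ) (l αc αd Smax Gmax : ℝ) (hl : 0 < l)
    (hαc : αc ∈ Set.Ioo (0 : ℝ) 1) (hαd : αd ∈ Set.Ioo (0 : ℝ) 1)
    (hSmax : 0 < Smax) (hGmax : 0 < Gmax)
    (hmS : Measurable S) (hmΔ : Measurable Δ)
    (hindep : IndepFun S Δ ℙ)
    (hlawS : ∀ s, (ℙ {ω | S ω ≤ s}).toReal = statCDF l αc αd Smax s)
    (hlawΔ : ∀ x, (ℙ {ω | Δ ω ≤ x}).toReal = laplaceCDF l x) :
    ∀ g : ℝ,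
      (0 ≤ g → g < Gmax →
        (ℙ {ω | min (max (-(Δ ω) - αd * S ω) 0) Gmax ≤ g}).toReal =
          1 - (1 - αc * αd) /
            (2 * (1 - αc * αd * exp (-((1 / αc - αd) * l * Smax / 2)))) *
            exp (-(l * g))) ∧
      (g < 0 → (ℙ {ω | min (max (-(Δ ω) - αd * S ω) 0) Gmax ≤ g}).toReal = 0) ∧
      (Gmax ≤ g → (ℙ {ω | min (max (-(Δ ω) - αd * S ω) 0) Gmax ≤ g}).toReal = 1) := by
  have := Measure.isProbabilityMeasure_map (μ := ℙ) hmS.aemeasurable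
  have := Measure.isProbabilityMeasure_map (μ := ℙ) hmΔ.aemeasurable
  have hlawS' : Measure.map S ℙ = storageLaw l αc αd Smax := Measure.ext_of_Iic _ _ fun a ↦ by
    rw [← ofReal_cdf, cdf_map_eq hmS hlawS, storageLaw_Iic hl hαc hαd hSmax]
  have hlawΔ' : ∀ t, Measure.map Δ ℙ (Iio t) = ENNReal.ofReal (laplaceCDF l t) := fun t ↦ by
    have hcdf := cdf_map_eq hmΔ hlawΔ
    have hatom := measure_singleton_eq_zero_of_continuousAt_cdf (x := t)
      (hcdf ▸ (continuous_laplaceCDF l).continuousAt)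
    rw [measure_congr (Iio_ae_eq_Iic' hatom), ← ofReal_cdf, hcdf]
  intro g
  refine ⟨fun hg₀ hgG ↦ ?_, fun hg ↦ ?_, fun hg ↦ ?_⟩
  · have hevent : {ω | min (max (-(Δ ω) - αd * S ω) 0) Gmax ≤ g} =
        {ω | Δ ω < -g - αd * S ω}ᶜ := by
      ext ω
      change _ ≤ g ↔ ¬ Δ ω < _
      rw [min_max_le_iff_le hg₀ hgG, not_lt]
      constructor <;> intro h <;> linarith
    have hexceed : ℙ {ω | Δ ω < -g - αd * S ω} = ENNReal.ofReal ((1 - αc * αd) /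
        (2 * (1 - αc * αd * exp (-((1 / αc - αd) * l * Smax / 2)))) * exp (-(l * g))) := by
      rw [measure_lt_comp_eq_lintegral_of_indepFun hmS hmΔ hindep (f := fun s ↦ -g - αd * s)
        (by fun_prop)]
      simp_rw [hlawΔ', hlawS']
      exact lintegral_laplaceCDF_storageLaw hl hαc hαd hSmax hg₀
    rw [hevent, ← measureReal_def, probReal_compl_eq_one_sub (measurableSet_lt hmΔ (by fun_prop)),
      measureReal_def, hexceed, ENNReal.toReal_ofReal]
    obtain ⟨-, -, hα₁, hD⟩ := storageLaw_constants hl hαc hαd hSmax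
    exact mul_nonneg (div_nonneg (by linarith) (by linarith)) (exp_pos _).le
  · have hempty : {ω | min (max (-(Δ ω) - αd * S ω) 0) Gmax ≤ g} = ∅ :=
      eq_empty_of_forall_notMem fun ω hω ↦
        (hg.trans_le (le_min (le_max_right _ _) hGmax.le)).not_ge hω
    rw [hempty, measure_empty, ENNReal.toReal_zero]
  · have huniv : {ω | min (max (-(Δ ω) - αd * S ω) 0) Gmax ≤ g} = univ :=
      eq_univ_of_forall fun ω ↦ (min_le_right _ _).trans hg
    rw [huniv, measure_univ, ENNReal.toReal_one]
end

section
/- Let $\Delta \sim$ Laplace($\lambda$) and suppose $\alpha = \alpha_c\alpha_d > e^{-\lambda G^{\max}}$. Then $\mathbb{E}[\alpha(G^{\max}+\Delta)^+ - (G^{\max}+\Delta)^-] > 0$. -/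
/-!
Split the line at `δ = -Gmax`, where `Gmax + δ` changes sign. On `(-∞, -Gmax]` the integrand is
`-(λ/2) (-Gmax - δ) e^{λδ}`, which reflects to an affine-times-exponential integral equal to
`-e^{-λ Gmax} / (2λ)`. On `(-Gmax, ∞)` it is nonnegative, and on `(0, ∞)` alone it integrates to
`α (1 + λ Gmax) / (2λ)`. This exceeds `e^{-λ Gmax} / (2λ)` because `α > e^{-λ Gmax}` and
`α λ Gmax > 0`.
-/

open MeasureTheory Real Set Filter Topology

theorem integrableOn_Iic_of_comp_neg {E : Type*} [NormedAddCommGroup E] {f : ℝ → E} {c : ℝ}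
    (h : IntegrableOn (fun x => f (-x)) (Ioi c)) : IntegrableOn f (Iic (-c)) := by
  rw [integrableOn_Iic_iff_integrableOn_Iio, ← (Measure.measurePreserving_neg volume)
    |>.integrableOn_comp_preimage (Homeomorph.neg ℝ).measurableEmbedding]
  simpa [Function.comp_def] using h

section AffineTimesExponential

variable {l : ℝ}

theorem tendsto_add_mul_exp_neg_mul_atTop (hl : 0 < l) (b : ℝ) :
    Tendsto (fun x => (x + b) * exp (-(l * x))) atTop (𝓝 0) := by
  have hx : Tendsto (fun x : ℝ => x * exp (-(l * x))) atTop (𝓝 0) := by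
    refine (tendsto_rpow_mul_exp_neg_mul_atTop_nhds_zero 1 l hl).congr' ?_
    filter_upwards [eventually_gt_atTop 0] with x hx
    rw [rpow_one, neg_mul]
  have hexp : Tendsto (fun x : ℝ => exp (-(l * x))) atTop (𝓝 0) :=
    tendsto_exp_atBot.comp (tendsto_neg_atTop_atBot.comp (tendsto_id.const_mul_atTop hl))
  simpa [add_mul] using hx.add (hexp.const_mul b)

theorem hasDerivAt_primitive_add_mul_exp_neg_mul (hl : l ≠ 0) (b x : ℝ) :
    HasDerivAt (fun x => -(l⁻¹ * ((x + (b + l⁻¹)) * exp (-(l * x)))))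
      ((x + b) * exp (-(l * x))) x := by
  have hexp : HasDerivAt (fun x => exp (-(l * x))) (exp (-(l * x)) * -l) x := by
    simpa using ((hasDerivAt_id x).const_mul l).neg.exp
  have h := ((((hasDerivAt_id' x).add_const (b + l⁻¹)).fun_mul hexp).const_mul l⁻¹).fun_neg
  refine h.congr_deriv ?_
  field_simp
  ring

variable {b c : ℝ}

theorem integrableOn_Ioi_add_mul_exp_neg_mul (hl : 0 < l) (hbc : 0 ≤ c + b) :
    IntegrableOn (fun x => (x + b) * exp (-(l * x))) (Ioi c) :=
  integrableOn_Ioi_deriv_of_nonneg' (fun x _ => hasDerivAt_primitive_add_mul_exp_neg_mul hl.ne' b x)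
    (fun x hx => mul_nonneg (by linarith [mem_Ioi.mp hx]) (exp_pos _).le)
    (by simpa using (tendsto_add_mul_exp_neg_mul_atTop hl (b + l⁻¹)).const_mul l⁻¹ |>.neg)

theorem integral_Ioi_add_mul_exp_neg_mul (hl : 0 < l) (hbc : 0 ≤ c + b) :
    ∫ x in Ioi c, (x + b) * exp (-(l * x)) = (c + b + l⁻¹) * exp (-(l * c)) / l := by
  rw [integral_Ioi_of_hasDerivAt_of_nonneg'
    (fun x _ => hasDerivAt_primitive_add_mul_exp_neg_mul hl.ne' b x)
    (fun x hx => mul_nonneg (by linarith [mem_Ioi.mp hx]) (exp_pos _).le)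
    (by simpa using (tendsto_add_mul_exp_neg_mul_atTop hl (b + l⁻¹)).const_mul l⁻¹ |>.neg)]
  field_simp
  ring

end AffineTimesExponential

noncomputable def driftIntegrand (l G α δ : ℝ) : ℝ :=
  (l / 2) * exp (-(l * |δ|)) * (α * max (G + δ) 0 - max (-(G + δ)) 0)

section DriftIntegrand

variable {l G α : ℝ}

theorem continuous_driftIntegrand (l G α : ℝ) : Continuous (driftIntegrand l G α) := by
  unfold driftIntegrand
  fun_prop

theorem driftIntegrand_of_pos (hG : 0 ≤ G) {δ : ℝ} (hδ : 0 < δ) :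
    driftIntegrand l G α δ = l / 2 * α * ((δ + G) * exp (-(l * δ))) := by
  rw [driftIntegrand, abs_of_pos hδ, max_eq_left (by linarith), max_eq_right (by linarith)]
  ring

theorem driftIntegrand_neg (hG : 0 ≤ G) {x : ℝ} (hx : G < x) :
    driftIntegrand l G α (-x) = -(l / 2 * ((x + -G) * exp (-(l * x)))) := by
  rw [driftIntegrand, abs_neg, abs_of_pos (by linarith), max_eq_right (by linarith),
    max_eq_left (by linarith)]
  ring

theorem driftIntegrand_nonneg (hl : 0 ≤ l) (hα : 0 ≤ α) {δ : ℝ} (hδ : -G < δ) :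
    0 ≤ driftIntegrand l G α δ := by
  rw [driftIntegrand, max_eq_right (by linarith : -(G + δ) ≤ 0), sub_zero]
  have := le_max_right (G + δ) 0
  positivity

theorem integrableOn_Iic_driftIntegrand (hl : 0 < l) (hG : 0 ≤ G) :
    IntegrableOn (driftIntegrand l G α) (Iic (-G)) := by
  exact integrableOn_Iic_of_comp_neg <| IntegrableOn.congr_fun
    ((integrableOn_Ioi_add_mul_exp_neg_mul (b := -G) hl (by simp)).const_mul (l / 2)).neg
    (fun x hx => (driftIntegrand_neg hG hx).symm) measurableSet_Ioi

theorem setIntegral_Iic_driftIntegrand (hl : 0 < l) (hG : 0 ≤ G) :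
    ∫ δ in Iic (-G), driftIntegrand l G α δ = -(exp (-(l * G)) / (2 * l)) := by
  rw [← integral_comp_neg_Ioi, setIntegral_congr_fun measurableSet_Ioi
    (fun x hx => driftIntegrand_neg hG hx), integral_neg, integral_const_mul,
    integral_Ioi_add_mul_exp_neg_mul hl (by simp)]
  field_simp
  ring

theorem integrableOn_Ioi_driftIntegrand (hl : 0 < l) (hG : 0 ≤ G) :
    IntegrableOn (driftIntegrand l G α) (Ioi (-G)) := by
  have hpos : IntegrableOn (driftIntegrand l G α) (Ioi 0) :=
    IntegrableOn.congr_fun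
      ((integrableOn_Ioi_add_mul_exp_neg_mul (c := 0) hl (by simpa using hG)).const_mul _)
      (fun δ hδ => (driftIntegrand_of_pos hG hδ).symm) measurableSet_Ioi
  rw [← Ioc_union_Ioi_eq_Ioi (by linarith : -G ≤ 0)]
  exact (continuous_driftIntegrand l G α).integrableOn_Ioc.union hpos

theorem le_setIntegral_Ioi_driftIntegrand (hl : 0 < l) (hG : 0 ≤ G) (hα : 0 ≤ α) :
    α * (1 + l * G) / (2 * l) ≤ ∫ δ in Ioi (-G), driftIntegrand l G α δ := by
  have hpos : ∫ δ in Ioi 0, driftIntegrand l G α δ = α * (1 + l * G) / (2 * l) := by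
    rw [setIntegral_congr_fun measurableSet_Ioi (fun δ hδ => driftIntegrand_of_pos hG hδ),
      integral_const_mul, integral_Ioi_add_mul_exp_neg_mul hl (by simpa using hG), mul_zero, neg_zero,
      exp_zero]
    field_simp
    ring
  rw [← hpos]
  refine setIntegral_mono_set (integrableOn_Ioi_driftIntegrand hl hG) ?_
    (Ioi_subset_Ioi (by linarith)).eventuallyLE
  filter_upwards [ae_restrict_mem measurableSet_Ioi] with δ hδ
  exact driftIntegrand_nonneg hl.le hα hδ

end DriftIntegrand

theorem stmt11_general (l Gmax αc αd : ℝ) (hl : 0 < l) (hGmax : 0 < Gmax)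
    (h : exp (-(l * Gmax)) < αc * αd) :
    0 < ∫ δ : ℝ, (l / 2) * exp (-(l * |δ|)) *
      ((αc * αd) * max (Gmax + δ) 0 - max (-(Gmax + δ)) 0) := by
  set α := αc * αd
  have hα : 0 < α := (exp_pos _).trans h
  change 0 < ∫ δ, driftIntegrand l Gmax α δ
  rw [← intervalIntegral.integral_Iic_add_Ioi (integrableOn_Iic_driftIntegrand hl hGmax.le)
    (integrableOn_Ioi_driftIntegrand hl hGmax.le), setIntegral_Iic_driftIntegrand hl hGmax.le]
  have hright := le_setIntegral_Ioi_driftIntegrand hl hGmax.le hα.le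
  have hgap : exp (-(l * Gmax)) / (2 * l) < α * (1 + l * Gmax) / (2 * l) := by
    gcongr
    linarith [mul_pos hα (mul_pos hl hGmax)]
  linarith

/-- Drift condition for Laplace(λ) errors: if `α > e^{-λ Gᵐᵃˣ}` then
`E[α(Gᵐᵃˣ+Δ)⁺ - (Gᵐᵃˣ+Δ)⁻] > 0`. -/
theorem stmt11 (l Gmax αc αd : ℝ) (hl : 0 < l) (hGmax : 0 < Gmax)
    (hαc : αc ∈ Set.Ioo (0 : ℝ) 1) (hαd : αd ∈ Set.Ioo (0 : ℝ) 1)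
    (h : exp (-(l * Gmax)) < αc * αd) :
    0 < ∫ δ : ℝ, (l / 2) * exp (-(l * |δ|)) *
      ((αc * αd) * max (Gmax + δ) 0 - max (-(Gmax + δ)) 0) :=
  stmt11_general l Gmax αc αd hl hGmax h
end

section
/- Let $(\Delta_i)$ be IID with CDF $F_\Delta$ satisfying $\limsup_{x\to\infty} x\,F_\Delta(-x) \le c$ for some $c \ge 0$ and $\mu_\Theta := \mathbb{E}[\alpha_c(G^{\max}+\Delta)^+ - \frac{1}{\alpha_d}(G^{\max}+\Delta)^-] > 0$ with $\mathrm{Var}[\Theta] < \infty$. Let $S_{k+1} = \max\{S_k + \Theta_k, 0\}$ where $\Theta_k = \alpha_c(G^{\max}+\Delta_k)^+ - \frac{1}{\alpha_d}(G^{\max}+\Delta_k)^-$. Then $\lim_{n\to\infty} \frac{1}{n}\sum_{k=1}^{n} \mathbb{P}\{\Delta_{k+1} < -G^{\max} - \alpha_d S_{k+1}\} = 0$. -/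
/-!
Proof idea: unrolling the recursion, the storage level dominates the free random walk,
`S (k+1) ≥ s₁ + W k` with `W k = Θ 1 + ⋯ + Θ k`. Loss of load at time `k+1` therefore
requires either `S (k+1) ≤ s₁ + k μΘ / 2`, which by Chebyshev has probability at most
`4 Var[Θ] / (μΘ² k)`, or `Δ (k+1) ≤ -Gmax - αd (s₁ + k μΘ / 2)`, whose probability is a value
of the CDF of `Δ 1` at a point tending to `-∞`. Both bounds tend to zero, so the loss-of-load
probabilities do, and hence so do their Cesàro means.
-/

open MeasureTheory ProbabilityTheory Filter Topology Finset

lemma add_sum_Icc_le_of_eq_max {S Θ : ℕ → ℝ} (hS : ∀ k ≥ 1, S (k + 1) = max (S k + Θ k) 0)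
    (k : ℕ) : S 1 + ∑ i ∈ Icc 1 k, Θ i ≤ S (k + 1) := by
  induction k with
  | zero => simp
  | succ k ih =>
    rw [sum_Icc_succ_top (Nat.le_add_left 1 k), hS (k + 1) (Nat.le_add_left 1 k)]
    linarith [le_max_left (S (k + 1) + Θ (k + 1)) 0]

lemma Filter.Tendsto.cesaro_Icc {u : ℕ → ℝ} {l : ℝ} (h : Tendsto u atTop (𝓝 l)) :
    Tendsto (fun n : ℕ => (1 / (n : ℝ)) * ∑ k ∈ Icc 1 n, u k) atTop (𝓝 l) := by
  refine ((h.comp (tendsto_add_atTop_nat 1)).cesaro).congr fun n => ?_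
  rw [one_div, ← Finset.Ico_add_one_right_eq_Icc, sum_Ico_eq_sum_range]
  simp [add_comm]

section

variable {Ω : Type*} [MeasurableSpace Ω] {μ : Measure Ω}

lemma measureReal_lt_sub_mul_le [IsFiniteMeasure μ] {a : ℝ} (ha : 0 ≤ a) (X Y : Ω → ℝ)
    (b t : ℝ) :
    μ.real {ω | X ω < b - a * Y ω} ≤ μ.real (X ⁻¹' Set.Iic (b - a * t)) + μ.real {ω | Y ω ≤ t} := by
  refine (measureReal_mono fun ω (hω : X ω < b - a * Y ω) => ?_).trans (measureReal_union_le _ _)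
  by_cases hY : Y ω ≤ t
  · exact Or.inr hY
  · exact Or.inl (by simp only [Set.mem_preimage, Set.mem_Iic]; nlinarith)

lemma tendsto_measureReal_preimage_Iic_atBot [IsProbabilityMeasure μ] {X : Ω → ℝ}
    (hX : AEMeasurable X μ) : Tendsto (fun t => μ.real (X ⁻¹' Set.Iic t)) atBot (𝓝 0) := by
  have : IsProbabilityMeasure (μ.map X) := Measure.isProbabilityMeasure_map hX
  refine (tendsto_cdf_atBot (μ.map X)).congr fun t => ?_
  rw [cdf_eq_real, measureReal_def, measureReal_def, Measure.map_apply_of_aemeasurable hX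
    measurableSet_Iic]

lemma measure_abs_sum_sub_sum_integral_ge_le [IsFiniteMeasure μ] {ι : Type*} {X : ι → Ω → ℝ}
    (hX : iIndepFun X μ) (hL2 : ∀ i, MemLp (X i) 2 μ) (s : Finset ι) {ε : ℝ} (hε : 0 < ε) :
    μ {ω | ε ≤ |∑ i ∈ s, X i ω - ∑ i ∈ s, μ[X i]|} ≤
      ENNReal.ofReal ((∑ i ∈ s, variance (X i) μ) / ε ^ 2) := by
  have hcheb := meas_ge_le_variance_div_sq (memLp_finsetSum' s fun i _ => hL2 i) hε
  simp_rw [Finset.sum_apply] at hcheb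
  rwa [IndepFun.variance_sum (fun i _ => hL2 i) fun i _ j _ hij => hX.indepFun hij,
    integral_finsetSum s fun i _ => (hL2 i).integrable one_le_two] at hcheb

lemma measureReal_le_add_half_drift_le [IsProbabilityMeasure μ] {S Θ : ℕ → Ω → ℝ}
    {s₁ m v : ℝ} (hΘ : iIndepFun Θ μ) (hL2 : ∀ i, MemLp (Θ i) 2 μ) (hmean : ∀ i, μ[Θ i] = m)
    (hvar : ∀ i, variance (Θ i) μ = v) (hm : 0 < m) (hS1 : ∀ ω, S 1 ω = s₁)
    (hS : ∀ k ≥ 1, ∀ ω, S (k + 1) ω = max (S k ω + Θ k ω) 0) {k : ℕ} (hk : 1 ≤ k) :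
    μ.real {ω | S (k + 1) ω ≤ s₁ + k * m / 2} ≤ 4 * v / (m ^ 2 * k) := by
  have hk₀ : (0 : ℝ) < k := by exact_mod_cast hk
  have hv : 0 ≤ v := hvar 0 ▸ variance_nonneg _ _
  have hsub : {ω | S (k + 1) ω ≤ s₁ + k * m / 2} ⊆
      {ω | k * m / 2 ≤ |∑ i ∈ Icc 1 k, Θ i ω - ∑ i ∈ Icc 1 k, μ[Θ i]|} := by
    intro ω (hω : S (k + 1) ω ≤ s₁ + k * m / 2)
    have hlower := add_sum_Icc_le_of_eq_max (S := fun j => S j ω) (hS · · ω) k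
    simp only [Set.mem_ofPred_eq, hS1, hmean, sum_const, Nat.card_Icc, add_tsub_cancel_right,
      nsmul_eq_mul] at hlower ⊢
    exact le_abs.2 (Or.inr (by linarith))
  have hcheb := measure_abs_sum_sub_sum_integral_ge_le hΘ hL2 (Icc 1 k)
    (by positivity : 0 < k * m / 2)
  simp only [hvar, sum_const, Nat.card_Icc, add_tsub_cancel_right, nsmul_eq_mul] at hcheb
  calc μ.real {ω | S (k + 1) ω ≤ s₁ + k * m / 2}
      ≤ k * v / (k * m / 2) ^ 2 :=
        (measureReal_mono hsub).trans (ENNReal.toReal_le_of_le_ofReal (by positivity) hcheb)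
    _ = 4 * v / (m ^ 2 * k) := by field_simp; ring

end

theorem stmt12_general {Ω : Type*} [MeasureSpace Ω] [IsProbabilityMeasure (ℙ : Measure Ω)]
    (Δ : ℕ → Ω → ℝ) (Θ : ℕ → Ω → ℝ) (S : ℕ → Ω → ℝ)
    (αc αd Gmax s₁ μΘ : ℝ)
    (hαd : αd ∈ Set.Ioo (0 : ℝ) 1)
    (hindep : iIndepFun Δ ℙ)
    (hident : ∀ i j, IdentDistrib (Δ i) (Δ j) ℙ ℙ)
    (hΘ : ∀ i ω, Θ i ω =
      αc * max (Gmax + Δ i ω) 0 - (1 / αd) * max (-(Gmax + Δ i ω)) 0)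
    (hL2 : ∀ i, MemLp (Θ i) 2 ℙ)
    (hmean : ∀ i, ∫ ω, Θ i ω ∂ℙ = μΘ) (hdrift : 0 < μΘ)
    (hS1 : ∀ ω, S 1 ω = s₁)
    (hSdyn : ∀ k ≥ 1, ∀ ω, S (k + 1) ω = max (S k ω + Θ k ω) 0) :
    Tendsto
      (fun n : ℕ => (1 / (n : ℝ)) *
        ∑ k ∈ Finset.Icc 1 n,
          (ℙ {ω | Δ (k + 1) ω < -Gmax - αd * S (k + 1) ω}).toReal)
      atTop (𝓝 0) := by
  set g : ℝ → ℝ := fun x => αc * max (Gmax + x) 0 - (1 / αd) * max (-(Gmax + x)) 0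
  have hg : Measurable g := by fun_prop
  have hΘg : Θ = fun i => g ∘ Δ i := funext fun i => funext (hΘ i)
  have hΘindep : iIndepFun Θ ℙ := hΘg ▸ hindep.comp (fun _ => g) fun _ => hg
  have hvar (i : ℕ) : variance (Θ i) ℙ = variance (Θ 1) ℙ := by
    rw [hΘg]; exact ((hident i 1).comp hg).variance_eq
  set threshold : ℕ → ℝ := fun k => -Gmax - αd * (s₁ + k * μΘ / 2)
  have hbound (k : ℕ) (hk : 1 ≤ k) :
      (ℙ {ω | Δ (k + 1) ω < -Gmax - αd * S (k + 1) ω}).toReal ≤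
        (ℙ (Δ 1 ⁻¹' Set.Iic (threshold k))).toReal + 4 * variance (Θ 1) ℙ / (μΘ ^ 2 * k) := by
    have hsplit := measureReal_lt_sub_mul_le (μ := ℙ) hαd.1.le (Δ (k + 1)) (S (k + 1)) (-Gmax)
      (s₁ + k * μΘ / 2)
    have hstorage := measureReal_le_add_half_drift_le hΘindep hL2 hmean hvar hdrift hS1 hSdyn hk
    simp only [measureReal_def, (hident (k + 1) 1).measure_mem_eq measurableSet_Iic]
      at hsplit hstorage
    exact hsplit.trans (add_le_add_right hstorage _)
  have hthreshold : Tendsto threshold atTop atBot := by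
    refine tendsto_atBot_add_const_left _ _ (tendsto_neg_atTop_atBot.comp ?_)
    exact (tendsto_atTop_add_const_left _ _ ((tendsto_natCast_atTop_atTop.atTop_mul_const
      hdrift).atTop_div_const two_pos)).const_mul_atTop hαd.1
  have hchebyshev : Tendsto (fun k : ℕ => 4 * variance (Θ 1) ℙ / (μΘ ^ 2 * k)) atTop (𝓝 0) :=
    (tendsto_const_div_atTop_nhds_zero_nat _).congr fun k => div_div _ _ _
  refine Tendsto.cesaro_Icc (squeeze_zero' (.of_forall fun _ => ENNReal.toReal_nonneg)
    ((eventually_ge_atTop 1).mono hbound) ?_)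
  simpa [measureReal_def] using
    ((tendsto_measureReal_preimage_Iic_atBot (hident 1 1).aemeasurable_fst).comp
      hthreshold).add hchebyshev

/-- Under the full-storage policy with unlimited storage capacity, a light tail of
`F_Δ` and positive drift of the storage increments imply that the average
loss-of-load probability tends to zero. -/
theorem stmt12 {Ω : Type*} [MeasureSpace Ω] [IsProbabilityMeasure (ℙ : Measure Ω)]
    (Δ : ℕ → Ω → ℝ) (Θ : ℕ → Ω → ℝ) (S : ℕ → Ω → ℝ) (F : ℝ → ℝ)
    (αc αd Gmax s₁ c μΘ : ℝ)
    (hαc : αc ∈ Set.Ioo (0 : ℝ) 1) (hαd : αd ∈ Set.Ioo (0 : ℝ) 1) (hGmax : 0 < Gmax)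
    (hmeas : ∀ i, Measurable (Δ i))
    (hindep : iIndepFun Δ ℙ)
    (hident : ∀ i j, IdentDistrib (Δ i) (Δ j) ℙ ℙ)
    (hF : ∀ x, F x = (ℙ {ω | Δ 1 ω ≤ x}).toReal)
    (hc : 0 ≤ c) (htail : limsup (fun x : ℝ => x * F (-x)) atTop ≤ c)
    (hΘ : ∀ i ω, Θ i ω =
      αc * max (Gmax + Δ i ω) 0 - (1 / αd) * max (-(Gmax + Δ i ω)) 0)
    (hL2 : ∀ i, MemLp (Θ i) 2 ℙ)
    (hmean : ∀ i, ∫ ω, Θ i ω ∂ℙ = μΘ) (hdrift : 0 < μΘ)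
    (hS1 : ∀ ω, S 1 ω = s₁) (hs₁ : 0 ≤ s₁)
    (hSdyn : ∀ k ≥ 1, ∀ ω, S (k + 1) ω = max (S k ω + Θ k ω) 0) :
    Tendsto
      (fun n : ℕ => (1 / (n : ℝ)) *
        ∑ k ∈ Finset.Icc 1 n,
          (ℙ {ω | Δ (k + 1) ω < -Gmax - αd * S (k + 1) ω}).toReal)
      atTop (𝓝 0) :=
  stmt12_general Δ Θ S αc αd Gmax s₁ μΘ hαd hindep hident hΘ hL2 hmean hdrift hS1 hSdyn
end

section
/- Let $J_2: [0, S^{\max}] \to \mathbb{R}$ be convex and nonincreasing, $\rho_1 \ge 0$, $0 < \alpha_c, \alpha_d < 1$. Define $J_c(s_2) = \frac{\rho_1}{\alpha_c} s_2 + J_2(s_2)$ and $J_d(s_2) = \rho_1\alpha_d s_2 + J_2(s_2)$ on $[0,S^{\max}]$, and let $s^c \in \arg\min J_c$, $s^d \in \arg\min J_d$ be the largest minimizers. Then $s^c \le s^d$. -/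
/-- The charging threshold is below the discharging threshold: for a convex
nonincreasing `J2` on `[0, Sᵐᵃˣ]`, the largest minimizer of
`s ↦ (ρ₁/αc) s + J2 s` is no larger than the largest minimizer of
`s ↦ ρ₁ αd s + J2 s`. -/
theorem stmt16 (Smax ρ1 αc αd : ℝ) (J2 : ℝ → ℝ) (sc sd : ℝ)
    (hSmax : 0 ≤ Smax) (hρ1 : 0 ≤ ρ1)
    (hαc : αc ∈ Set.Ioo (0 : ℝ) 1) (hαd : αd ∈ Set.Ioo (0 : ℝ) 1)
    (hconv : ConvexOn ℝ (Set.Icc 0 Smax) J2)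
    (hanti : AntitoneOn J2 (Set.Icc 0 Smax))
    (hscmem : sc ∈ Set.Icc (0 : ℝ) Smax) (hsdmem : sd ∈ Set.Icc (0 : ℝ) Smax)
    (hscmin : ∀ x ∈ Set.Icc (0 : ℝ) Smax,
      ρ1 / αc * sc + J2 sc ≤ ρ1 / αc * x + J2 x)
    (hsclargest : ∀ x ∈ Set.Icc (0 : ℝ) Smax,
      (∀ y ∈ Set.Icc (0 : ℝ) Smax, ρ1 / αc * x + J2 x ≤ ρ1 / αc * y + J2 y) → x ≤ sc)
    (hsdmin : ∀ x ∈ Set.Icc (0 : ℝ) Smax,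
      ρ1 * αd * sd + J2 sd ≤ ρ1 * αd * x + J2 x)
    (hsdlargest : ∀ x ∈ Set.Icc (0 : ℝ) Smax,
      (∀ y ∈ Set.Icc (0 : ℝ) Smax, ρ1 * αd * x + J2 x ≤ ρ1 * αd * y + J2 y) → x ≤ sd) :
    sc ≤ sd := by
  rcases eq_or_lt_of_le hρ1 with h0 | hpos
  · -- ρ1 = 0: both objectives equal J2, so sc is also a minimizer of J_d
    apply hsdlargest sc hscmem
    intro y hy
    have := hscmin y hy
    simp only [← h0, zero_div, zero_mul, zero_add] at this ⊢
    exact this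
  · -- ρ1 > 0: add the two one-sided minimality inequalities
    have h1 := hscmin sd hsdmem
    have h2 := hsdmin sc hscmem
    have hcoef : ρ1 * αd < ρ1 / αc := by
      have h1' : ρ1 * αd < ρ1 := by nlinarith [hαd.2, hαd.1]
      have h2' : ρ1 < ρ1 / αc := by
        rw [lt_div_iff₀ hαc.1]; nlinarith [hαc.2, hαc.1]
      linarith
    nlinarith [hcoef]
end
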